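/- arXiv:math/0612277 — 9 statements merged into one kernel-verified Lean document; each statement's English description precedes it below -/
import Mathlib

section
/- For every natural number n, the number of permutations of {1,…,n} simultaneously avoiding the patterns 123, 132 and 213 equals the n-th Fibonacci number F_n, where F_0 = F_1 = 1 and F_n = F_{n-1} + F_{n-2} for n ≥ 2. -/
/-!
A permutation avoids `123`, `132` and `213` exactly when `σ j < σ i` whenever `j ≥ i + 2`:
an ascent `σ i < σ j` across such a gap forms one of the three patterns together with the
entry at `i + 1`. In such a permutation of `n + 2` the largest value sits at position `0`
or `1`. In the first case the rest is such a permutation of `n + 1`; in the second the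
permutation starts with `n + 1, n + 2` and the rest is such a permutation of `n`. This is
the Fibonacci recursion.
-/

/-- A permutation `σ` of `{1,…,n}` contains the pattern `τ` (given in one-line
notation as a function `Fin k → ℕ`) if there is a strictly increasing choice of
indices along which `σ` is order-isomorphic to `τ`. -/
def Contains {n k : ℕ} (σ : Equiv.Perm (Fin n)) (τ : Fin k → ℕ) : Prop :=
  ∃ f : Fin k → Fin n, StrictMono f ∧ ∀ a b : Fin k, σ (f a) < σ (f b) ↔ τ a < τ b

/-- `σ` avoids the pattern `τ`. -/
def Avoids {n k : ℕ} (σ : Equiv.Perm (Fin n)) (τ : Fin k → ℕ) : Prop :=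
  ¬ Contains σ τ

def p123 : Fin 3 → ℕ := ![1, 2, 3]
def p132 : Fin 3 → ℕ := ![1, 3, 2]
def p213 : Fin 3 → ℕ := ![2, 1, 3]
def p1432 : Fin 4 → ℕ := ![1, 4, 3, 2]
def p3214 : Fin 4 → ℕ := ![3, 2, 1, 4]
def p2143 : Fin 4 → ℕ := ![2, 1, 4, 3]

/-- The pattern `q_k = 1 (k+1) k (k-1) ⋯ 2` of length `k+1` (one-line notation,
position `j` is 0-indexed here, values 1-indexed). -/
def qpat (k : ℕ) : Fin (k + 1) → ℕ := fun j => if j.val = 0 then 1 else k + 2 - j.val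

/-- The pattern `r_k = k (k-1) ⋯ 2 1 (k+1)` of length `k+1`. -/
def rpat (k : ℕ) : Fin (k + 1) → ℕ := fun j => if j.val = k then k + 1 else k - j.val

/-- The pattern `s_k = (k-1)(k-2) ⋯ 2 1 (k+1) k` of length `k+1`. -/
def spat (k : ℕ) : Fin (k + 1) → ℕ := fun j =>
  if j.val = k - 1 then k + 1 else if j.val = k then k else k - 1 - j.val

/-- The pattern `u_k = 2 1 (k+1) k (k-1) ⋯ 4 3` of length `k+1`. -/
def upat (k : ℕ) : Fin (k + 1) → ℕ := fun j =>
  if j.val = 0 then 2 else if j.val = 1 then 1 else k + 3 - j.val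

/-- Fibonacci numbers with `F 0 = F 1 = 1`. -/
def F : ℕ → ℕ
  | 0 => 1
  | 1 => 1
  | n + 2 => F (n + 1) + F n

open Function

def FarDecreasing {α : Type*} [LT α] {n : ℕ} (f : Fin n → α) : Prop :=
  ∀ i j : Fin n, i.val + 2 ≤ j.val → f j < f i

section FarDecreasing

variable {α : Type*}

theorem farDecreasing_cons_iff [LT α] {m : ℕ} (a : α) (f : Fin m → α) :
    FarDecreasing (Fin.cons a f : Fin (m + 1) → α) ↔
      (∀ j : Fin m, 1 ≤ j.val → f j < a) ∧ FarDecreasing f := by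
  have h₀ (k : ℕ) : k + 2 ≤ 0 ↔ False := iff_false_intro (by omega)
  have h₁ (k : ℕ) : 0 + 2 ≤ k + 1 ↔ 1 ≤ k := by omega
  have h₂ (k l : ℕ) : k + 1 + 2 ≤ l + 1 ↔ k + 2 ≤ l := by omega
  simp only [FarDecreasing, Fin.forall_fin_succ, Fin.cons_zero, Fin.cons_succ, Fin.val_zero,
    Fin.val_succ, h₀, h₁, h₂, false_imp_iff, true_and]

theorem farDecreasing_comp_iff [LinearOrder α] {β : Type*} [Preorder β] {g : α → β}
    (hg : StrictMono g) {n : ℕ} {f : Fin n → α} : FarDecreasing (g ∘ f) ↔ FarDecreasing f := by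
  simp [FarDecreasing, hg.lt_iff_lt]

theorem FarDecreasing.val_le_one_of_isMax [Preorder α] {n : ℕ} {f : Fin n → α}
    (hf : FarDecreasing f) {p : Fin n} (hp : IsMax (f p)) : p.val ≤ 1 := by
  by_contra! h
  have hlt := hf ⟨0, by omega⟩ p (by simp; omega)
  exact hlt.not_ge (hp hlt.le)

theorem farDecreasing_of_le_one [LT α] {n : ℕ} (hn : n ≤ 1) (f : Fin n → α) :
    FarDecreasing f :=
  fun i j h => by omega

end FarDecreasing

section Patterns

variable {n : ℕ} {σ : Equiv.Perm (Fin n)}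

theorem avoids_of_farDecreasing (hσ : FarDecreasing σ) {τ : Fin 3 → ℕ} (hτ : τ 0 < τ 2) :
    Avoids σ τ := by
  rintro ⟨f, hf, hστ⟩
  have h₀₁ : f 0 < f 1 := hf (by decide)
  have h₁₂ : f 1 < f 2 := hf (by decide)
  exact (hσ (f 0) (f 2) (by omega)).not_gt ((hστ 0 2).2 hτ)

theorem contains_of_triple {τ : Fin 3 → ℕ} {i m j : Fin n} (him : i < m) (hmj : m < j)
    (h : ∀ a b : Fin 3, σ (![i, m, j] a) < σ (![i, m, j] b) ↔ τ a < τ b) : Contains σ τ :=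
  ⟨![i, m, j], Fin.strictMono_iff_lt_succ.2 (by simp [Fin.forall_fin_succ, him, hmj]), h⟩

theorem contains_of_not_farDecreasing (hσ : ¬ FarDecreasing σ) :
    Contains σ p123 ∨ Contains σ p132 ∨ Contains σ p213 := by
  obtain ⟨i, j, hij, hσij⟩ : ∃ i j : Fin n, i.val + 2 ≤ j.val ∧ σ i < σ j := by
    simp only [FarDecreasing, not_forall, not_lt] at hσ
    obtain ⟨i, j, hij, hle⟩ := hσ
    exact ⟨i, j, hij, hle.lt_of_ne (σ.injective.ne (Fin.ne_of_lt (by omega)))⟩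
  set m : Fin n := ⟨i + 1, by omega⟩
  have him : i < m := Fin.lt_def.2 (by simp [m])
  have hmj : m < j := Fin.lt_def.2 (by simp [m]; omega)
  have hmi : σ m ≠ σ i := σ.injective.ne him.ne'
  have hmj' : σ m ≠ σ j := σ.injective.ne hmj.ne
  rcases hmi.lt_or_gt with hm | hm
  · refine .inr (.inr (contains_of_triple him hmj ?_))
    simp [Fin.forall_fin_succ, p213, hm, hm.le, hσij, hσij.le, hm.trans hσij, (hm.trans hσij).le]
  rcases hmj'.lt_or_gt with hm' | hm'
  · refine .inl (contains_of_triple him hmj ?_)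
    simp [Fin.forall_fin_succ, p123, hm, hm.le, hm', hm'.le, hσij, hσij.le]
  · refine .inr (.inl (contains_of_triple him hmj ?_))
    simp [Fin.forall_fin_succ, p132, hm, hm.le, hm', hm'.le, hσij, hσij.le]

theorem avoids_iff_farDecreasing :
    (Avoids σ p123 ∧ Avoids σ p132 ∧ Avoids σ p213) ↔ FarDecreasing σ := by
  refine ⟨fun ⟨h₁, h₂, h₃⟩ => ?_, fun h => ?_⟩
  · by_contra hσ
    rcases contains_of_not_farDecreasing hσ with h | h | h
    exacts [h₁ h, h₂ h, h₃ h]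
  · exact ⟨avoids_of_farDecreasing h (by decide), avoids_of_farDecreasing h (by decide),
      avoids_of_farDecreasing h (by decide)⟩

end Patterns

section Counting

-- Injective self-maps of `Fin n` stand in for permutations, so that `Fin.cons` can build them.
abbrev FarDecreasingInj (n : ℕ) := {f : Fin n → Fin n // Injective f ∧ FarDecreasing f}

variable {n : ℕ}

def prependTop (g : Fin (n + 1) → Fin (n + 1)) : Fin (n + 2) → Fin (n + 2) :=
  Fin.cons (Fin.last _) (Fin.castSucc ∘ g)

def prependTopPair (g : Fin n → Fin n) : Fin (n + 2) → Fin (n + 2) :=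
  Fin.cons (Fin.last n).castSucc (Fin.cons (Fin.last _) (Fin.castSucc ∘ Fin.castSucc ∘ g))

theorem prependTop_injective : Injective (prependTop (n := n)) :=
  fun _ _ h => (Fin.castSucc_injective _).comp_left (Fin.cons_right_injective _ h)

theorem prependTopPair_injective : Injective (prependTopPair (n := n)) := fun _ _ h =>
  ((Fin.castSucc_injective _).comp (Fin.castSucc_injective _)).comp_left
    (Fin.cons_right_injective _ (Fin.cons_right_injective _ h))

theorem injective_prependTop_iff {g : Fin (n + 1) → Fin (n + 1)} :
    Injective (prependTop g) ↔ Injective g := by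
  simp [prependTop, Fin.cons_injective_iff, Fin.castSucc_injective, Injective.of_comp_iff,
    Fin.castSucc_ne_last]

theorem farDecreasing_prependTop_iff {g : Fin (n + 1) → Fin (n + 1)} :
    FarDecreasing (prependTop g) ↔ FarDecreasing g := by
  simp [prependTop, farDecreasing_cons_iff, farDecreasing_comp_iff Fin.strictMono_castSucc]

theorem injective_prependTopPair_iff {g : Fin n → Fin n} :
    Injective (prependTopPair g) ↔ Injective g := by
  simp [prependTopPair, Fin.cons_injective_iff, Fin.castSucc_injective, Injective.of_comp_iff]

theorem farDecreasing_prependTopPair_iff {g : Fin n → Fin n} :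
    FarDecreasing (prependTopPair g) ↔ FarDecreasing g := by
  simp [prependTopPair, farDecreasing_cons_iff, farDecreasing_comp_iff Fin.strictMono_castSucc,
    Fin.forall_fin_succ]

theorem apply_zero_eq_of_apply_one_eq_last {f : Fin (n + 2) → Fin (n + 2)} (hinj : Injective f)
    (hf : FarDecreasing f) (h₁ : f 1 = Fin.last _) : f 0 = (Fin.last n).castSucc := by
  obtain ⟨⟨_ | _ | k, hk⟩, hq⟩ := Finite.injective_iff_surjective.1 hinj (Fin.last n).castSucc
  · exact hq
  · exact absurd (hq.symm.trans h₁) (Fin.castSucc_ne_last _)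
  · have h₀ : (Fin.last n).castSucc < f 0 := hq ▸ hf 0 ⟨k + 2, hk⟩ (by simp)
    rw [Fin.castSucc_lt_iff_succ_le, Fin.succ_last, Fin.last_le_iff] at h₀
    exact absurd (hinj (h₀.trans h₁.symm)) zero_ne_one

theorem exists_prependTop_or_prependTopPair {f : Fin (n + 2) → Fin (n + 2)} (hinj : Injective f)
    (hf : FarDecreasing f) : (∃ g, prependTop g = f) ∨ ∃ g, prependTopPair g = f := by
  obtain ⟨p, hp⟩ := Finite.injective_iff_surjective.1 hinj (Fin.last _)
  have hp₁ : p.val ≤ 1 := hf.val_le_one_of_isMax (hp ▸ isMax_iff_eq_top.2 rfl)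
  rcases p with ⟨_ | _ | k, hk⟩
  · replace hp : f 0 = Fin.last _ := hp
    refine .inl ⟨fun i => (f i.succ).castPred (hp ▸ hinj.ne (Fin.succ_ne_zero i)), ?_⟩
    funext x
    cases x using Fin.cases <;> simp [prependTop, hp]
  · replace hp : f 1 = Fin.last _ := hp
    have h₀ := apply_zero_eq_of_apply_one_eq_last hinj hf hp
    have hlt (i : Fin n) : (f i.succ.succ).val < n := by
      simpa [h₀, Fin.lt_def] using hf 0 i.succ.succ (by simp)
    refine .inr ⟨fun i => (f i.succ.succ).castLT (hlt i), ?_⟩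
    funext x
    cases x using Fin.cases with
    | zero => simp [prependTopPair, h₀]
    | succ x => cases x using Fin.cases <;> simp [prependTopPair, hp, Fin.ext_iff]
  · simp at hp₁

theorem card_farDecreasingInj_of_le_one (hn : n ≤ 1) : Nat.card (FarDecreasingInj n) = 1 := by
  have : Subsingleton (Fin n) := Fin.subsingleton_iff_le_one.2 hn
  exact Nat.card_eq_one_iff_unique.2
    ⟨inferInstance, ⟨⟨id, injective_id, farDecreasing_of_le_one hn _⟩⟩⟩

theorem card_farDecreasingInj_add_two (n : ℕ) :
    Nat.card (FarDecreasingInj (n + 2)) =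
      Nat.card (FarDecreasingInj (n + 1)) + Nat.card (FarDecreasingInj n) := by
  let top : FarDecreasingInj (n + 1) → FarDecreasingInj (n + 2) := fun g =>
    ⟨prependTop g.1, injective_prependTop_iff.2 g.2.1, farDecreasing_prependTop_iff.2 g.2.2⟩
  let topPair : FarDecreasingInj n → FarDecreasingInj (n + 2) := fun g =>
    ⟨prependTopPair g.1, injective_prependTopPair_iff.2 g.2.1,
      farDecreasing_prependTopPair_iff.2 g.2.2⟩
  have hinj : Injective (Sum.elim top topPair) := by
    refine Injective.sumElim ?_ ?_ fun g g' h => ?_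
    · exact fun g g' h => Subtype.ext (prependTop_injective (congrArg Subtype.val h))
    · exact fun g g' h => Subtype.ext (prependTopPair_injective (congrArg Subtype.val h))
    · have := congrFun (congrArg Subtype.val h) 0
      simp [top, topPair, prependTop, prependTopPair, Fin.ext_iff] at this
  have hsurj : Surjective (Sum.elim top topPair) := by
    rintro ⟨f, hinj, hf⟩
    rcases exists_prependTop_or_prependTopPair hinj hf with ⟨g, rfl⟩ | ⟨g, rfl⟩
    · exact ⟨.inl ⟨g, injective_prependTop_iff.1 hinj, farDecreasing_prependTop_iff.1 hf⟩, rfl⟩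
    · exact ⟨.inr ⟨g, injective_prependTopPair_iff.1 hinj, farDecreasing_prependTopPair_iff.1 hf⟩,
        rfl⟩
  rw [← Nat.card_sum]
  exact (Nat.card_congr (Equiv.ofBijective _ ⟨hinj, hsurj⟩)).symm

theorem card_farDecreasingInj : ∀ n, Nat.card (FarDecreasingInj n) = F n
  | 0 | 1 => card_farDecreasingInj_of_le_one (by omega)
  | n + 2 => by
    rw [card_farDecreasingInj_add_two, card_farDecreasingInj (n + 1), card_farDecreasingInj n, F]

end Counting

theorem card_perm_farDecreasing (n : ℕ) :
    Nat.card {σ : Equiv.Perm (Fin n) // FarDecreasing σ} = Nat.card (FarDecreasingInj n) :=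
  Nat.card_congr
    { toFun σ := ⟨σ.1, σ.1.injective, σ.2⟩
      invFun f := ⟨.ofBijective f.1 (Finite.injective_iff_bijective.1 f.2.1), f.2.2⟩
      left_inv _ := Subtype.ext (Equiv.ext fun _ => rfl)
      right_inv _ := rfl }

theorem stmt1 (n : ℕ) :
    Nat.card {σ : Equiv.Perm (Fin n) //
      Avoids σ p123 ∧ Avoids σ p132 ∧ Avoids σ p213} = F n := by
  rw [Nat.card_congr (Equiv.subtypeEquivRight fun σ => avoids_iff_farDecreasing),
    card_perm_farDecreasing, card_farDecreasingInj]
end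

section
/- For every integer n ≥ 1, the number of permutations of {1,…,n} simultaneously avoiding the patterns 123 and 213 equals 2^{n-1}. -/
namespace Stmt2Aux

open Equiv Fin

def P {m : ℕ} (σ : Equiv.Perm (Fin m)) : Prop :=
  ∀ i j k : Fin m, i < j → j < k → σ k ≤ σ i ∨ σ k ≤ σ j

lemma strictMono3 {α} [Preorder α] {x y z : α} (h1 : x < y) (h2 : y < z) :
    StrictMono ![x, y, z] := by
  intro a b hab
  fin_cases a <;> fin_cases b <;>
    simp_all [Matrix.cons_val_zero, Matrix.cons_val_one, Matrix.head_cons] <;>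
    first
      | exact h1
      | exact h2
      | exact h1.trans h2
      | exact absurd hab (by decide)

lemma pat3_iff {m : ℕ} (σ : Equiv.Perm (Fin m)) (i j k : Fin m) (τ : Fin 3 → ℕ)
    (h01 : σ i < σ j ↔ τ 0 < τ 1) (h02 : σ i < σ k ↔ τ 0 < τ 2)
    (h12 : σ j < σ k ↔ τ 1 < τ 2) (h10 : σ j < σ i ↔ τ 1 < τ 0)
    (h20 : σ k < σ i ↔ τ 2 < τ 0) (h21 : σ k < σ j ↔ τ 2 < τ 1) :
    ∀ a b : Fin 3, σ (![i, j, k] a) < σ (![i, j, k] b) ↔ τ a < τ b := by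
  intro a b
  fin_cases a <;> fin_cases b
  · exact iff_of_false (lt_irrefl _) (lt_irrefl _)
  · exact h01
  · exact h02
  · exact h10
  · exact iff_of_false (lt_irrefl _) (lt_irrefl _)
  · exact h12
  · exact h20
  · exact h21
  · exact iff_of_false (lt_irrefl _) (lt_irrefl _)

lemma avoids_iff {m : ℕ} (σ : Equiv.Perm (Fin m)) :
    (Avoids σ p123 ∧ Avoids σ p213) ↔ P σ := by
  constructor
  · rintro ⟨h1, h2⟩ i j k hij hjk
    by_contra hcon
    push_neg at hcon
    obtain ⟨hik, hjk'⟩ := hcon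
    have hne : σ i ≠ σ j := fun h => absurd (σ.injective h) (ne_of_lt hij)
    rcases hne.lt_or_gt with hij' | hji'
    · exact h1 ⟨![i, j, k], strictMono3 hij hjk, pat3_iff σ i j k p123
        (iff_of_true hij' (by decide)) (iff_of_true hik (by decide))
        (iff_of_true hjk' (by decide)) (iff_of_false (asymm hij') (by decide))
        (iff_of_false (asymm hik) (by decide)) (iff_of_false (asymm hjk') (by decide))⟩
    · exact h2 ⟨![i, j, k], strictMono3 hij hjk, pat3_iff σ i j k p213
        (iff_of_false (asymm hji') (by decide)) (iff_of_true hik (by decide))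
        (iff_of_true hjk' (by decide)) (iff_of_true hji' (by decide))
        (iff_of_false (asymm hik) (by decide)) (iff_of_false (asymm hjk') (by decide))⟩
  · rintro hP
    constructor
    · rintro ⟨f, hf, hpat⟩
      have h02 : σ (f 0) < σ (f 2) := (hpat 0 2).mpr (by decide)
      have h12 : σ (f 1) < σ (f 2) := (hpat 1 2).mpr (by decide)
      rcases hP (f 0) (f 1) (f 2) (hf (by decide)) (hf (by decide)) with h | h
      · exact absurd h02 (not_lt.mpr h)
      · exact absurd h12 (not_lt.mpr h)
    · rintro ⟨f, hf, hpat⟩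
      have h02 : σ (f 0) < σ (f 2) := (hpat 0 2).mpr (by decide)
      have h12 : σ (f 1) < σ (f 2) := (hpat 1 2).mpr (by decide)
      rcases hP (f 0) (f 1) (f 2) (hf (by decide)) (hf (by decide)) with h | h
      · exact absurd h02 (not_lt.mpr h)
      · exact absurd h12 (not_lt.mpr h)

def extPerm {n : ℕ} (σ : Equiv.Perm (Fin n)) (c : Fin (n + 1)) : Equiv.Perm (Fin (n + 1)) :=
  finSuccEquivLast.trans ((Equiv.optionCongr σ).trans (finSuccEquiv' c).symm)

lemma extPerm_last {n : ℕ} (σ : Equiv.Perm (Fin n)) (c : Fin (n + 1)) :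
    extPerm σ c (Fin.last n) = c := by
  simp [extPerm, finSuccEquivLast_last]

lemma extPerm_castSucc {n : ℕ} (σ : Equiv.Perm (Fin n)) (c : Fin (n + 1)) (i : Fin n) :
    extPerm σ c i.castSucc = c.succAbove (σ i) := by
  simp [extPerm, finSuccEquivLast_castSucc]

lemma P_extPerm {n : ℕ} (σ : Equiv.Perm (Fin n)) (c : Fin (n + 1)) (hc : c.val ≤ 1)
    (hσ : P σ) : P (extPerm σ c) := by
  intro i j k hij hjk
  rcases eq_or_ne k (Fin.last n) with rfl | hk
  · obtain ⟨j', rfl⟩ := Fin.exists_castSucc_eq.mpr (ne_of_lt hjk)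
    obtain ⟨i', rfl⟩ := Fin.exists_castSucc_eq.mpr (ne_of_lt (hij.trans hjk))
    rw [extPerm_last, extPerm_castSucc, extPerm_castSucc]
    have hne : σ i' ≠ σ j' := fun h =>
      absurd (σ.injective h) (ne_of_lt (Fin.castSucc_lt_castSucc_iff.mp hij))
    have h1 : c.succAbove (σ i') ≠ c := Fin.succAbove_ne c (σ i')
    have h2 : c.succAbove (σ j') ≠ c := Fin.succAbove_ne c (σ j')
    have h3 : c.succAbove (σ i') ≠ c.succAbove (σ j') := fun h =>
      hne (Fin.succAbove_right_injective h)
    rw [Fin.le_def, Fin.le_def]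
    rw [← Fin.val_ne_iff] at h1 h2 h3
    omega
  · obtain ⟨k', rfl⟩ := Fin.exists_castSucc_eq.mpr hk
    obtain ⟨j', rfl⟩ := Fin.exists_castSucc_eq.mpr
      (ne_of_lt (hjk.trans (Fin.castSucc_lt_last k')))
    obtain ⟨i', rfl⟩ := Fin.exists_castSucc_eq.mpr
      (ne_of_lt ((hij.trans hjk).trans (Fin.castSucc_lt_last k')))
    rw [extPerm_castSucc, extPerm_castSucc, extPerm_castSucc]
    rw [Fin.succAbove_le_succAbove_iff, Fin.succAbove_le_succAbove_iff]
    exact hσ i' j' k' (Fin.castSucc_lt_castSucc_iff.mp hij)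
      (Fin.castSucc_lt_castSucc_iff.mp hjk)

lemma val_last_le_one {n : ℕ} (τ : Equiv.Perm (Fin (n + 1))) (hτ : P τ) :
    (τ (Fin.last n)).val ≤ 1 := by
  by_contra hcv
  push_neg at hcv
  set c := τ (Fin.last n) with hc
  have hn : 2 ≤ n := by have hlt : (c : ℕ) < n + 1 := c.isLt; omega
  have hone : ((1 : Fin (n + 1)) : ℕ) = 1 := by rw [Fin.val_one']; exact Nat.mod_eq_of_lt (by omega)
  have h0 : (0 : Fin (n + 1)) ≠ c := by rw [← Fin.val_ne_iff]; simp; omega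
  have h1' : (1 : Fin (n + 1)) ≠ c := by rw [← Fin.val_ne_iff]; omega
  set a := τ.symm 0 with ha
  set b := τ.symm 1 with hb
  have hτa : τ a = 0 := τ.apply_symm_apply 0
  have hτb : τ b = 1 := τ.apply_symm_apply 1
  have hab : a ≠ b := by
    intro h; rw [h, hτb] at hτa
    rw [← Fin.val_eq_val] at hτa
    rw [hone] at hτa
    simp at hτa
  have halast : a ≠ Fin.last n := by intro h; rw [h, ← hc] at hτa; exact h0 hτa.symm
  have hblast : b ≠ Fin.last n := by intro h; rw [h, ← hc] at hτb; exact h1' hτb.symm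
  have hav : (τ a).val = 0 := by rw [hτa]; simp
  have hbv : (τ b).val = 1 := by rw [hτb, hone]
  rcases hab.lt_or_gt with h | h
  · rcases hτ a b (Fin.last n) h (Fin.lt_last_iff_ne_last.mpr hblast) with hle | hle <;>
      rw [Fin.le_def] at hle <;> omega
  · rcases hτ b a (Fin.last n) h (Fin.lt_last_iff_ne_last.mpr halast) with hle | hle <;>
      rw [Fin.le_def] at hle <;> omega

def resPerm {n : ℕ} (τ : Equiv.Perm (Fin (n + 1))) : Equiv.Perm (Fin n) :=
  Equiv.removeNone (finSuccEquivLast.symm.trans (τ.trans (finSuccEquiv' (τ (Fin.last n)))))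

lemma resPerm_spec {n : ℕ} (τ : Equiv.Perm (Fin (n + 1))) (i : Fin n) :
    τ i.castSucc = (τ (Fin.last n)).succAbove (resPerm τ i) := by
  set e : Option (Fin n) ≃ Option (Fin n) :=
    finSuccEquivLast.symm.trans (τ.trans (finSuccEquiv' (τ (Fin.last n)))) with he
  have hnone : e none = none := by
    simp [he, finSuccEquiv'_at]
  have hsome : ∃ x', e (some i) = some x' := by
    rcases Option.eq_none_or_eq_some (e (some i)) with h | ⟨x, h⟩
    · exact absurd (e.injective (h.trans hnone.symm)) (by simp)
    · exact ⟨x, h⟩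
  have key : some (resPerm τ i) = e (some i) := Equiv.removeNone_some e hsome
  have : e (some i) = finSuccEquiv' (τ (Fin.last n)) (τ i.castSucc) := by
    simp [he, finSuccEquivLast_symm_some]
  rw [this] at key
  have := congrArg (finSuccEquiv' (τ (Fin.last n))).symm key
  simpa using this.symm

lemma extPerm_resPerm {n : ℕ} (τ : Equiv.Perm (Fin (n + 1))) :
    extPerm (resPerm τ) (τ (Fin.last n)) = τ := by
  apply Equiv.ext
  intro x
  rcases eq_or_ne x (Fin.last n) with rfl | hx
  · rw [extPerm_last]
  · obtain ⟨y, rfl⟩ := Fin.exists_castSucc_eq.mpr hx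
    rw [extPerm_castSucc, resPerm_spec]

lemma P_resPerm {n : ℕ} (τ : Equiv.Perm (Fin (n + 1))) (hτ : P τ) : P (resPerm τ) := by
  intro i j k hij hjk
  have := hτ i.castSucc j.castSucc k.castSucc
    (Fin.castSucc_lt_castSucc_iff.mpr hij) (Fin.castSucc_lt_castSucc_iff.mpr hjk)
  rw [resPerm_spec, resPerm_spec, resPerm_spec,
    Fin.succAbove_le_succAbove_iff, Fin.succAbove_le_succAbove_iff] at this
  exact this

lemma card_succ (n : ℕ) (hn : 1 ≤ n) :
    Nat.card {τ : Equiv.Perm (Fin (n + 1)) // P τ} =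
      Nat.card {σ : Equiv.Perm (Fin n) // P σ} * 2 := by
  have hF : Function.Bijective
      (fun x : {σ : Equiv.Perm (Fin n) // P σ} × Fin 2 =>
        (⟨extPerm x.1.1 (Fin.castLE (by omega : 2 ≤ n + 1) x.2),
          P_extPerm x.1.1 _ (by simpa using Nat.lt_succ_iff.mp x.2.isLt) x.1.2⟩ :
          {τ : Equiv.Perm (Fin (n + 1)) // P τ})) := by
    constructor
    · rintro ⟨⟨σ, hσ⟩, c⟩ ⟨⟨σ', hσ'⟩, c'⟩ h
      simp only [Subtype.mk.injEq] at h
      have hc : c = c' := by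
        have := congrArg (fun τ : Equiv.Perm (Fin (n + 1)) => τ (Fin.last n)) h
        simp only [extPerm_last] at this
        have := congrArg Fin.val this
        exact Fin.ext this
      subst hc
      have hσσ : σ = σ' := by
        apply Equiv.ext
        intro i
        have := congrArg (fun τ : Equiv.Perm (Fin (n + 1)) => τ i.castSucc) h
        simp only [extPerm_castSucc] at this
        exact Fin.succAbove_right_injective this
      simp [hσσ]
    · rintro ⟨τ, hτ⟩
      have hcv := val_last_le_one τ hτ
      refine ⟨⟨⟨resPerm τ, P_resPerm τ hτ⟩, ⟨(τ (Fin.last n)).val, by omega⟩⟩, ?_⟩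
      simp only [Subtype.mk.injEq]
      have h2 : ∀ c : Fin (n + 1), c = τ (Fin.last n) → extPerm (resPerm τ) c = τ := by
        rintro c rfl; exact extPerm_resPerm τ
      exact h2 _ (Fin.ext rfl)
  calc Nat.card {τ : Equiv.Perm (Fin (n + 1)) // P τ}
      = Nat.card ({σ : Equiv.Perm (Fin n) // P σ} × Fin 2) :=
        (Nat.card_congr (Equiv.ofBijective _ hF)).symm
    _ = Nat.card {σ : Equiv.Perm (Fin n) // P σ} * 2 := by
        rw [Nat.card_prod]
        congr 1
        simp [Nat.card_eq_fintype_card]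

lemma card_P : ∀ n : ℕ, 1 ≤ n →
    Nat.card {σ : Equiv.Perm (Fin n) // P σ} = 2 ^ (n - 1) := by
  intro n
  induction n with
  | zero => omega
  | succ m ih =>
    intro _
    rcases Nat.eq_zero_or_pos m with rfl | hm
    · have h1 : ∀ σ : Equiv.Perm (Fin 1), P σ := by
        intro σ i j k hij hjk
        rw [Fin.lt_def] at hij hjk
        omega
      rw [Nat.card_congr (Equiv.subtypeUnivEquiv h1)]
      simp [Nat.card_eq_fintype_card]
    · rw [card_succ m hm, ih hm, ← pow_succ]
      congr 1
      omega

end Stmt2Aux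

theorem stmt2 (n : ℕ) (hn : 1 ≤ n) :
    Nat.card {σ : Equiv.Perm (Fin n) // Avoids σ p123 ∧ Avoids σ p213} = 2 ^ (n - 1) := by
  rw [Nat.card_congr (Equiv.subtypeEquivRight (fun σ => Stmt2Aux.avoids_iff σ))]
  exact Stmt2Aux.card_P n hn
end

section
/- For every integer n ≥ 1, the number of permutations of {1,…,n} simultaneously avoiding the patterns 123 and 132 equals 2^{n-1}. -/
/-!
A permutation avoids both 123 and 132 exactly when no entry is followed by two larger
entries. Write such a permutation of `{1,…,n+1}` as its first entry `p` followed by a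
permutation `e` of `{1,…,n}` (values above `p` shifted up). Then `e` has the same property,
and `p` must be one of the two largest values, since every larger value appears after `p`.
So the count doubles at each step.
-/

namespace Equiv.Perm

variable {n : ℕ}

def finCons (p : Fin (n + 1)) (e : Perm (Fin n)) : Perm (Fin (n + 1)) :=
  p.cycleRange.symm * decomposeFin.symm (0, e)

@[simp]
theorem finCons_apply_zero (p : Fin (n + 1)) (e : Perm (Fin n)) : finCons p e 0 = p := by
  simp [finCons]

@[simp]
theorem finCons_apply_succ (p : Fin (n + 1)) (e : Perm (Fin n)) (x : Fin n) :
    finCons p e x.succ = p.succAbove (e x) := by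
  simp [finCons]

theorem finCons_injective :
    Function.Injective fun x : Fin (n + 1) × Perm (Fin n) ↦ finCons x.1 x.2 := by
  rintro ⟨p, e⟩ ⟨p', e'⟩ h
  have hp : p = p' := by simpa using congr($h 0)
  subst hp
  have he : e = e' := ext fun x ↦ by simpa using congr($h x.succ)
  rw [he]

noncomputable def finConsEquiv : Fin (n + 1) × Perm (Fin n) ≃ Perm (Fin (n + 1)) :=
  .ofBijective _ <| (Fintype.bijective_iff_injective_and_card _).2
    ⟨finCons_injective, by simp [Fintype.card_perm, Nat.factorial_succ]⟩

@[simp]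
theorem finConsEquiv_apply (x : Fin (n + 1) × Perm (Fin n)) :
    finConsEquiv x = finCons x.1 x.2 :=
  rfl

end Equiv.Perm

open Equiv Perm

section

variable {n : ℕ}

def HasTwoLargerAfter (σ : Perm (Fin n)) (i : Fin n) : Prop :=
  ∃ j k, i < j ∧ j < k ∧ σ i < σ j ∧ σ i < σ k

theorem hasTwoLargerAfter_finCons_succ_iff (p : Fin (n + 1)) (e : Perm (Fin n))
    (i : Fin n) :
    HasTwoLargerAfter (finCons p e) i.succ ↔ HasTwoLargerAfter e i := by
  simp [HasTwoLargerAfter, Fin.exists_fin_succ, Fin.succ_lt_succ_iff,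
    (Fin.strictMono_succAbove p).lt_iff_lt]

theorem hasTwoLargerAfter_zero_iff (σ : Perm (Fin (n + 1))) :
    HasTwoLargerAfter σ 0 ↔ (σ 0 : ℕ) + 2 ≤ n := by
  constructor
  · rintro ⟨j, k, -, hjk, hj, hk⟩
    have hne : (σ j : ℕ) ≠ σ k := Fin.val_ne_of_ne (σ.injective.ne hjk.ne)
    have := (σ j).is_lt
    have := (σ k).is_lt
    rw [Fin.lt_def] at hj hk
    omega
  · intro h
    set j := σ.symm ⟨σ 0 + 1, by omega⟩
    set k := σ.symm ⟨σ 0 + 2, by omega⟩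
    have hj : σ 0 < σ j := by simp [j, Fin.lt_def]
    have hk : σ 0 < σ k := by simp [k, Fin.lt_def]
    have hjk : j ≠ k := by simp [j, k]
    have hj0 : 0 < j := Fin.pos_iff_ne_zero.2 fun h ↦ hj.ne (by rw [h])
    have hk0 : 0 < k := Fin.pos_iff_ne_zero.2 fun h ↦ hk.ne (by rw [h])
    rcases hjk.lt_or_gt with hjk | hkj
    · exact ⟨j, k, hj0, hjk, hj, hk⟩
    · exact ⟨k, j, hk0, hkj, hk, hj⟩

theorem forall_not_hasTwoLargerAfter_finCons_iff (p : Fin (n + 1)) (e : Perm (Fin n)) :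
    (∀ i, ¬HasTwoLargerAfter (finCons p e) i) ↔
      n ≤ p + 1 ∧ ∀ i, ¬HasTwoLargerAfter e i := by
  simp only [Fin.forall_fin_succ, hasTwoLargerAfter_zero_iff, finCons_apply_zero,
    hasTwoLargerAfter_finCons_succ_iff]
  exact and_congr_left' (by omega)

theorem contains_p123_or_p132_iff (σ : Perm (Fin n)) :
    Contains σ p123 ∨ Contains σ p132 ↔ ∃ i, HasTwoLargerAfter σ i := by
  constructor
  · rintro (⟨f, hf, hσ⟩ | ⟨f, hf, hσ⟩) <;>
      exact ⟨f 0, f 1, f 2, hf (by decide), hf (by decide),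
        (hσ 0 1).2 (by decide), (hσ 0 2).2 (by decide)⟩
  · rintro ⟨i, j, k, hij, hjk, hj, hk⟩
    have hf : StrictMono ![i, j, k] := by
      refine Fin.strictMono_iff_lt_succ.2 fun a ↦ ?_
      fin_cases a <;> simpa
    rcases (σ.injective.ne hjk.ne).lt_or_gt with hjk' | hkj'
    · refine .inl ⟨_, hf, fun a b ↦ ?_⟩
      fin_cases a <;> fin_cases b <;>
        simp [p123, hj, hk, hjk', hj.not_gt, hk.not_gt, hjk'.not_gt]
    · refine .inr ⟨_, hf, fun a b ↦ ?_⟩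
      fin_cases a <;> fin_cases b <;>
        simp [p132, hj, hk, hkj', hj.not_gt, hk.not_gt, hkj'.not_gt]

theorem avoids_p123_and_p132_iff (σ : Perm (Fin n)) :
    Avoids σ p123 ∧ Avoids σ p132 ↔ ∀ i, ¬HasTwoLargerAfter σ i := by
  rw [Avoids, Avoids, ← not_or, contains_p123_or_p132_iff, not_exists]

theorem card_fin_le_add_one (n : ℕ) :
    Nat.card {p : Fin (n + 1) // n ≤ p + 1} = n + 1 - (n - 1) := by
  rw [← Fin.card_Ici (⟨n - 1, by omega⟩ : Fin (n + 1)), ← Nat.card_eq_finsetCard]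
  exact Nat.card_congr <| .subtypeEquivRight fun p ↦ by simp [Fin.le_def]

theorem card_forall_not_hasTwoLargerAfter_succ (n : ℕ) :
    Nat.card {σ : Perm (Fin (n + 1)) // ∀ i, ¬HasTwoLargerAfter σ i} =
      Nat.card {p : Fin (n + 1) // n ≤ p + 1} *
        Nat.card {e : Perm (Fin n) // ∀ i, ¬HasTwoLargerAfter e i} := by
  rw [← Nat.card_prod, ← Nat.card_congr Equiv.subtypeProdEquivProd]
  exact Nat.card_congr <| .symm <|
    finConsEquiv.subtypeEquiv fun x ↦ by simp [forall_not_hasTwoLargerAfter_finCons_iff]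

theorem card_forall_not_hasTwoLargerAfter (n : ℕ) :
    Nat.card {σ : Perm (Fin n) // ∀ i, ¬HasTwoLargerAfter σ i} = 2 ^ (n - 1) := by
  induction n with
  | zero => simp [HasTwoLargerAfter]
  | succ n ih =>
    rw [card_forall_not_hasTwoLargerAfter_succ, card_fin_le_add_one, ih]
    rcases n with _ | n
    · rfl
    · rw [show n + 2 - (n + 1 - 1) = 2 by omega, Nat.add_sub_cancel, Nat.add_sub_cancel, pow_succ']

end

theorem stmt3_general (n : ℕ) :
    Nat.card {σ : Equiv.Perm (Fin n) // Avoids σ p123 ∧ Avoids σ p132} = 2 ^ (n - 1) := by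
  simp_rw [avoids_p123_and_p132_iff]
  exact card_forall_not_hasTwoLargerAfter n

theorem stmt3 (n : ℕ) (hn : 1 ≤ n) :
    Nat.card {σ : Equiv.Perm (Fin n) // Avoids σ p123 ∧ Avoids σ p132} = 2 ^ (n - 1) :=
  stmt3_general n
end

section
/- Let k ≥ 2 and n ≥ 2, and let q_k be the pattern 1 (k+1) k (k−1) ⋯ 2 of length k+1. If π is a permutation of {1,…,n} avoiding 123, 213 and q_k with π(2) = n, then there exists an integer j with 1 ≤ j ≤ k−1 such that π(1) = n−j, the first j+1 entries of π are (n−j), n, (n−1), …, (n−j+1) in this order, and the remaining n−j−1 entries form a permutation of {1,…,n−j−1} that avoids 123, 213 and q_k. -/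
/-!
Avoiding both `123` and `213` means that no entry is preceded by two smaller entries. Since
`π(1)` already precedes everything after position `1`, every later entry above `π(1)` must
exceed all entries between position `1` and itself. With `π(2) = n` this forces the entries
above `π(1)` into the decreasing run `n, n-1, …, π(1)+1` right after `π(1)`, followed by the
entries below `π(1)`. The run has length `j = n - π(1)`, and `π(1)` together with it is an
occurrence of `q_j`, hence of `q_k` once `j ≥ k`.
-/

open Equiv

namespace Avoids

variable {n : ℕ} {π : Perm (Fin n)}

theorem lt_apply_of_p123_p213 (h123 : Avoids π p123) (h213 : Avoids π p213) {a b c : Fin n}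
    (hab : a < b) (hbc : b < c) (hac : π a < π c) : π c < π b := by
  by_contra! hcb
  have hbc' : π b < π c := lt_of_le_of_ne hcb (π.injective.ne hbc.ne)
  have hmono : StrictMono ![a, b, c] :=
    Fin.strictMono_iff_lt_succ.mpr fun i => by fin_cases i <;> simpa
  rcases lt_or_gt_of_ne (π.injective.ne hab.ne) with hab' | hba'
  · exact h123 ⟨![a, b, c], hmono, fun x y => by
      fin_cases x <;> fin_cases y <;> simp [p123] <;> omega⟩
  · exact h213 ⟨![a, b, c], hmono, fun x y => by
      fin_cases x <;> fin_cases y <;> simp [p213] <;> omega⟩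

theorem of_strictMono {m l : ℕ} {σ : Perm (Fin m)} {τ : Fin l → ℕ} (h : Avoids π τ)
    {e : Fin m → Fin n} (he : StrictMono e) (hval : ∀ i, (π (e i)).val = (σ i).val) :
    Avoids σ τ := by
  rintro ⟨f, hf, hiff⟩
  refine h ⟨e ∘ f, he.comp hf, fun a b => ?_⟩
  rw [← hiff a b]
  simp only [Function.comp_apply, Fin.lt_def, hval]

end Avoids

section Staircase

variable {n : ℕ} {π : Perm (Fin n)}

theorem apply_eq_sub_of_apply_one_eq (h123 : Avoids π p123) (h213 : Avoids π p213)
    (hn : 1 < n) (hmax : (π ⟨1, hn⟩).val = n - 1) :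
    ∀ i (hi : i < n), 1 ≤ i → (π ⟨0, by omega⟩).val < n - i → (π ⟨i, hi⟩).val = n - i := by
  intro i
  induction i using Nat.strong_induction_on with
  | _ i ih =>
  intro hi hi1 h0
  rcases Nat.lt_or_ge i 2 with hi2 | hi2
  · obtain rfl : i = 1 := by omega
    exact hmax
  have above : ∀ p : Fin n, n - i < (π p).val → p.val < i := by
    intro p hp
    have hpn := (π p).isLt
    have hm := ih (n - (π p).val) (by omega) (by omega) (by omega) (by omega)
    have hmp : (⟨n - (π p).val, by omega⟩ : Fin n) = p := π.injective (Fin.ext (by omega))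
    have := congrArg Fin.val hmp
    simp only at this
    omega
  have hle : (π ⟨i, hi⟩).val ≤ n - i := by
    by_contra! h
    exact (above _ h).false
  obtain ⟨c, hc⟩ := π.surjective ⟨n - i, by omega⟩
  replace hc : (π c).val = n - i := by rw [hc]
  have hic : i ≤ c.val := by
    by_contra! hci
    rcases Nat.eq_zero_or_pos c.val with hc0 | hc0
    · have : c = ⟨0, by omega⟩ := Fin.ext hc0
      rw [this] at hc
      omega
    · have := ih c.val hci c.isLt hc0 (by omega)
      simp only [Fin.eta] at this
      omega
  rcases hic.lt_or_eq with hic | hic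
  · have := Avoids.lt_apply_of_p123_p213 h123 h213 (a := ⟨0, by omega⟩) (b := ⟨i, hi⟩)
      (Fin.mk_lt_mk.mpr (by omega)) (Fin.lt_def.mpr hic) (Fin.lt_def.mpr (by omega))
    rw [Fin.lt_def] at this
    omega
  · rw [← hc]
    congr 2
    exact Fin.ext hic

theorem apply_lt_apply_zero_of_apply_one_eq (h123 : Avoids π p123) (h213 : Avoids π p213)
    (hn : 1 < n) (hmax : (π ⟨1, hn⟩).val = n - 1) (p : Fin n)
    (hp : n - (π ⟨0, by omega⟩).val ≤ p.val) : (π p).val < (π ⟨0, by omega⟩).val := by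
  have h0n := (π ⟨0, by omega⟩).isLt
  have hpn := (π p).isLt
  have hp0 : π p ≠ π ⟨0, by omega⟩ := π.injective.ne (Fin.ne_of_val_ne (by simp only; omega))
  by_contra! hge
  have hgt : (π ⟨0, by omega⟩).val < (π p).val := lt_of_le_of_ne hge (Fin.val_ne_of_ne hp0.symm)
  have hm := apply_eq_sub_of_apply_one_eq h123 h213 hn hmax (n - (π p).val) (by omega)
    (by omega) (by omega)
  have : (⟨n - (π p).val, by omega⟩ : Fin n) = p := π.injective (Fin.ext (by omega))
  have := congrArg Fin.val this
  simp only at this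
  omega

theorem contains_qpat_of_apply_eq_sub {k : ℕ} (hkn : k < n)
    (hstair : ∀ i (hi : i < n), 1 ≤ i → i ≤ k → (π ⟨i, hi⟩).val = n - i)
    (h0 : (π ⟨0, by omega⟩).val < n - k) : Contains π (qpat k) := by
  have hval : ∀ a : Fin (k + 1), (π ⟨a.val, by omega⟩).val =
      if a.val = 0 then (π ⟨0, by omega⟩).val else n - a.val := by
    intro a
    split_ifs with ha
    · simp only [ha]
    · exact hstair a.val _ (by omega) (by omega)
  refine ⟨fun a => ⟨a.val, by omega⟩, fun a b h => h, fun a b => ?_⟩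
  rw [Fin.lt_def, hval a, hval b]
  simp only [qpat]
  split_ifs <;> omega

end Staircase

theorem exists_perm_eq_restrict {n m d : ℕ} (π : Perm (Fin n)) (hdm : d + m ≤ n)
    (hlt : ∀ i : Fin m, (π ⟨d + i.val, by omega⟩).val < m) :
    ∃ σ : Perm (Fin m), (∀ {l} (τ : Fin l → ℕ), Avoids π τ → Avoids σ τ) ∧
      ∀ i : Fin m, (π ⟨d + i.val, by omega⟩).val = (σ i).val := by
  let g : Fin m → Fin m := fun i => ⟨_, hlt i⟩
  have hg : Function.Injective g := fun x y hxy => by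
    have hxy' := congrArg Fin.val hxy
    have := π.injective (Fin.ext hxy')
    simp only [Fin.mk.injEq] at this
    exact Fin.ext (by omega)
  have hemb : StrictMono fun i : Fin m => (⟨d + i.val, by omega⟩ : Fin n) :=
    fun a b h => Nat.add_lt_add_left h d
  exact ⟨Equiv.ofBijective g (Finite.injective_iff_bijective.mp hg),
    fun τ h => h.of_strictMono hemb fun _ => rfl, fun _ => rfl⟩

theorem stmt5 (k n : ℕ) (hn : 2 ≤ n) (π : Equiv.Perm (Fin n))
    (h1 : Avoids π p123) (h2 : Avoids π p213) (h3 : Avoids π (qpat k))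
    (hmax : (π ⟨1, by omega⟩).val = n - 1) :
    ∃ j : ℕ, 1 ≤ j ∧ j ≤ k - 1 ∧ ∃ hjn : j < n,
      (π ⟨0, by omega⟩).val = n - 1 - j ∧
      (∀ i : ℕ, ∀ _h2i : 2 ≤ i, ∀ _hij : i ≤ j, (π ⟨i, by omega⟩).val = n - i) ∧
      ∃ σ : Equiv.Perm (Fin (n - j - 1)),
        Avoids σ p123 ∧ Avoids σ p213 ∧ Avoids σ (qpat k) ∧
        ∀ i : Fin (n - j - 1),
          (π ⟨j + 1 + i.val, by have := i.isLt; omega⟩).val = (σ i).val := by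
  set v := (π ⟨0, by omega⟩).val
  have hvn : v < n := (π _).isLt
  have hv1 : v ≠ n - 1 := fun h => by
    simpa using π.injective (Fin.ext (hmax.trans h.symm))
  have hstair := apply_eq_sub_of_apply_one_eq h1 h2 (by omega) hmax
  have hjk : n - 1 - v ≤ k - 1 := by
    by_contra! hkj
    exact h3 (contains_qpat_of_apply_eq_sub (by omega)
      (fun i hi hi1 hik => hstair i hi hi1 (by omega)) (by omega))
  obtain ⟨σ, hσ, hσπ⟩ := exists_perm_eq_restrict π (d := n - 1 - v + 1)
    (m := n - (n - 1 - v) - 1) (by omega) fun i => by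
      have := apply_lt_apply_zero_of_apply_one_eq h1 h2 (by omega) hmax
        ⟨n - 1 - v + 1 + i.val, by omega⟩ (by simp only; omega)
      omega
  exact ⟨n - 1 - v, by omega, hjk, by omega, by omega,
    fun i h2i hij => hstair i _ (by omega) (by omega), σ, hσ _ h1, hσ _ h2, hσ _ h3, hσπ⟩
end

section
/- Let k ≥ 2 and let q_k be the pattern 1 (k+1) k (k−1) ⋯ 2 of length k+1. Let a_n be the number of permutations of {1,…,n} avoiding 123, 213 and q_k. Then in the ring of formal power series over ℤ, (∑_{n≥0} a_n x^n)·(1 − 2x + x^{k+1}) = 1 − x; that is, the generating function of (a_n) is (1−x)/(1−2x+x^{k+1}), the generating function of the k-generalized Fibonacci numbers. -/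
open Equiv Finset

lemma qpat_lt (k : ℕ) (a b : Fin (k+1)) :
    qpat k a < qpat k b ↔ (b.val ≠ 0 ∧ (a.val = 0 ∨ b.val < a.val)) := by
  have ha := a.isLt; have hb := b.isLt
  simp only [qpat]
  split_ifs <;> omega

lemma avoids_small {n kk : ℕ} (h : n < kk) (σ : Equiv.Perm (Fin n)) (τ : Fin kk → ℕ) :
    Avoids σ τ := by
  rintro ⟨f, hf, -⟩
  have := Fintype.card_le_of_injective f hf.injective
  simp only [Fintype.card_fin] at this; omega

lemma contains_of_embed {n m kk : ℕ} {σ : Equiv.Perm (Fin n)} {σ' : Equiv.Perm (Fin m)}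
    {τ : Fin kk → ℕ} (e : Fin m → Fin n) (he : StrictMono e)
    (hcomp : ∀ a b, σ (e a) < σ (e b) ↔ σ' a < σ' b) :
    Contains σ' τ → Contains σ τ := by
  rintro ⟨f, hf, hc⟩
  exact ⟨e ∘ f, he.comp hf, fun a b => by
    rw [Function.comp_apply, Function.comp_apply, hcomp, hc]⟩

lemma p123_lt : ∀ a b : Fin 3, (p123 a < p123 b ↔ a.val < b.val) := by decide

lemma p213_lt : ∀ a b : Fin 3,
    (p213 a < p213 b ↔ ((a.val = 1 ∧ b.val ≠ 1) ∨ (a.val = 0 ∧ b.val = 2))) := by decide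

lemma contains123 {N : ℕ} {σ : Equiv.Perm (Fin N)} {x y z : Fin N} (hxy : x < y) (hyz : y < z)
    (v1 : σ x < σ y) (v2 : σ y < σ z) : Contains σ p123 := by
  rw [Fin.lt_def] at v1 v2
  refine ⟨fun a => if a.val = 0 then x else if a.val = 1 then y else z, ?_, ?_⟩
  · intro a b hab
    rw [Fin.lt_def] at hab hxy hyz ⊢
    have := a.isLt; have := b.isLt
    dsimp only
    split_ifs <;> simp_all <;> omega
  · intro a b
    rw [p123_lt]
    have := a.isLt; have := b.isLt
    dsimp only
    split_ifs <;> rw [Fin.lt_def] <;> constructor <;> intro h <;> omega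

lemma contains213 {N : ℕ} {σ : Equiv.Perm (Fin N)} {x y z : Fin N} (hxy : x < y) (hyz : y < z)
    (v1 : σ y < σ x) (v2 : σ x < σ z) : Contains σ p213 := by
  rw [Fin.lt_def] at v1 v2
  refine ⟨fun a => if a.val = 0 then x else if a.val = 1 then y else z, ?_, ?_⟩
  · intro a b hab
    rw [Fin.lt_def] at hab hxy hyz ⊢
    have := a.isLt; have := b.isLt
    dsimp only
    split_ifs <;> simp_all <;> omega
  · intro a b
    rw [p213_lt]
    have := a.isLt; have := b.isLt
    dsimp only
    split_ifs <;> rw [Fin.lt_def] <;> constructor <;> intro h <;> omega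



variable {j m : ℕ} (σ' : Equiv.Perm (Fin m))

/-- first block: position 0 ↦ value m; positions 1..j ↦ values m+j, …, m+1 (decreasing);
positions j+1.. ↦ the values of σ' (shifted). -/
def bfun (j m : ℕ) (σ' : Equiv.Perm (Fin m)) : Fin (j+1+m) → Fin (j+1+m) := fun p =>
  if h0 : p.val = 0 then ⟨m, by omega⟩
  else if h1 : p.val ≤ j then ⟨m + (j + 1) - p.val, by omega⟩
  else ⟨(σ' ⟨p.val - (j+1), by have := p.isLt; omega⟩).val, by
    have := (σ' ⟨p.val - (j+1), by have := p.isLt; omega⟩).isLt; omega⟩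

lemma bfun_val0 {p : Fin (j+1+m)} (h : p.val = 0) : (bfun j m σ' p).val = m := by
  simp [bfun, h]

lemma bfun_val1 {p : Fin (j+1+m)} (h0 : p.val ≠ 0) (h1 : p.val ≤ j) :
    (bfun j m σ' p).val = m + (j + 1) - p.val := by
  simp [bfun, h0, h1]

lemma bfun_val2 {p : Fin (j+1+m)} (h1 : j < p.val) :
    (bfun j m σ' p).val = (σ' ⟨p.val - (j+1), by have := p.isLt; omega⟩).val := by
  have h0 : ¬ p.val = 0 := by omega
  simp [bfun, h0, not_le.2 h1]

lemma bfun_inj : Function.Injective (bfun j m σ') := by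
  intro p q h
  replace h := congrArg Fin.val h
  have hp := p.isLt; have hq := q.isLt
  have key : ∀ t : Fin m, (σ' t).val < m := fun t => (σ' t).isLt
  by_cases h0p : p.val = 0 <;> by_cases h1p : p.val ≤ j <;>
    by_cases h0q : q.val = 0 <;> by_cases h1q : q.val ≤ j
  all_goals first
    | (exact Fin.ext (by omega))
    | (rw [bfun_val0 σ' h0p] at h; rw [bfun_val0 σ' h0q] at h)
    | skip
  all_goals try omega
  · rw [bfun_val0 σ' h0p, bfun_val1 σ' h0q h1q] at h; omega
  · rw [bfun_val0 σ' h0p, bfun_val2 σ' (by omega : j < q.val)] at h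
    have := key ⟨q.val - (j+1), by omega⟩; omega
  · rw [bfun_val1 σ' h0p h1p, bfun_val0 σ' h0q] at h; omega
  · rw [bfun_val1 σ' h0p h1p, bfun_val1 σ' h0q h1q] at h; exact Fin.ext (by omega)
  · rw [bfun_val1 σ' h0p h1p, bfun_val2 σ' (by omega : j < q.val)] at h
    have := key ⟨q.val - (j+1), by omega⟩; omega
  · rw [bfun_val2 σ' (by omega : j < p.val), bfun_val0 σ' h0q] at h
    have := key ⟨p.val - (j+1), by omega⟩; omega
  · rw [bfun_val2 σ' (by omega : j < p.val), bfun_val1 σ' h0q h1q] at h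
    have := key ⟨p.val - (j+1), by omega⟩; omega
  · rw [bfun_val2 σ' (by omega : j < p.val), bfun_val2 σ' (by omega : j < q.val)] at h
    have := σ'.injective (Fin.ext h)
    have := congrArg Fin.val this
    simp only at this
    exact Fin.ext (by omega)

noncomputable def buildp (j m : ℕ) (σ' : Equiv.Perm (Fin m)) : Equiv.Perm (Fin (j+1+m)) :=
  Equiv.ofBijective _ ((Finite.injective_iff_bijective).1 (bfun_inj (j := j) (m := m) σ'))

lemma buildp_apply (p : Fin (j+1+m)) : buildp j m σ' p = bfun j m σ' p := rfl

lemma lt_C1 {p q : Fin (j+1+m)} (hp : p.val ≤ j) (hq : j < q.val) :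
    buildp j m σ' q < buildp j m σ' p := by
  rw [Fin.lt_def, buildp_apply, buildp_apply, bfun_val2 σ' hq]
  have key := (σ' ⟨q.val - (j+1), by have := q.isLt; omega⟩).isLt
  by_cases h0 : p.val = 0
  · rw [bfun_val0 σ' h0]; omega
  · rw [bfun_val1 σ' h0 hp]; omega

lemma lt_C2 {p q : Fin (j+1+m)} (hp : 1 ≤ p.val) (hpq : p < q) (hq : q.val ≤ j) :
    buildp j m σ' q < buildp j m σ' p := by
  rw [Fin.lt_def] at hpq
  rw [Fin.lt_def, buildp_apply, buildp_apply,
    bfun_val1 σ' (by omega) hq, bfun_val1 σ' (by omega) (by omega)]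
  omega

lemma lt_C3 {p q : Fin (j+1+m)} (hp : p.val = 0) (hq1 : 1 ≤ q.val) (hq : q.val ≤ j) :
    buildp j m σ' p < buildp j m σ' q := by
  rw [Fin.lt_def, buildp_apply, buildp_apply, bfun_val0 σ' hp, bfun_val1 σ' (by omega) hq]
  omega

lemma lt_C4 {p q : Fin (j+1+m)} (hp : j < p.val) (hq : j < q.val) :
    (buildp j m σ' p < buildp j m σ' q ↔
      σ' ⟨p.val - (j+1), by have := p.isLt; omega⟩ < σ' ⟨q.val - (j+1), by have := q.isLt; omega⟩) := by
  rw [Fin.lt_def, Fin.lt_def, buildp_apply, buildp_apply, bfun_val2 σ' hp, bfun_val2 σ' hq]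

lemma tail_transfer {kk : ℕ} {τ : Fin kk → ℕ} (f : Fin kk → Fin (j+1+m)) (hf : StrictMono f)
    (hall : ∀ a, j < (f a).val)
    (hc : ∀ a b, buildp j m σ' (f a) < buildp j m σ' (f b) ↔ τ a < τ b) :
    Contains σ' τ := by
  refine ⟨fun a => ⟨(f a).val - (j+1), by have := (f a).isLt; have := hall a; omega⟩, ?_, ?_⟩
  · intro a b hab
    have h2 := hf hab
    rw [Fin.lt_def] at h2
    have := hall a; have := hall b
    dsimp only
    rw [Fin.mk_lt_mk]
    omega
  · intro a b
    rw [← hc a b, lt_C4 σ' (hall a) (hall b)]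

lemma strictMono_val_le {a c : ℕ} {f : Fin a → Fin c} (hf : StrictMono f) (b : Fin a) :
    b.val ≤ (f b).val := by
  obtain ⟨t, ht⟩ := b
  induction t with
  | zero => exact Nat.zero_le _
  | succ s ih =>
    have h1 := ih (by omega)
    have h2 := hf (show (⟨s, by omega⟩ : Fin a) < ⟨s+1, ht⟩ by rw [Fin.mk_lt_mk]; omega)
    rw [Fin.lt_def] at h2
    simp only [Fin.val_mk] at h1 h2 ⊢
    omega

lemma buildp_avoids123 (h1 : Avoids σ' p123) : Avoids (buildp j m σ') p123 := by
  rintro ⟨f, hf, hc⟩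
  have m01 : f 0 < f 1 := hf (by decide)
  have m12 : f 1 < f 2 := hf (by decide)
  have v01 : buildp j m σ' (f 0) < buildp j m σ' (f 1) := (hc 0 1).2 (by rw [p123_lt]; decide)
  have v12 : buildp j m σ' (f 1) < buildp j m σ' (f 2) := (hc 1 2).2 (by rw [p123_lt]; decide)
  have h1' : j < (f 1).val := by
    by_contra hcon
    push_neg at hcon
    by_cases h2 : (f 2).val ≤ j
    · exact absurd v12 (asymm (lt_C2 σ' (by have := m01; rw [Fin.lt_def] at this; omega) m12 h2))
    · exact absurd v12 (asymm (lt_C1 σ' hcon (by omega)))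
  have h2' : j < (f 2).val := by have := m12; rw [Fin.lt_def] at this; omega
  have h0' : j < (f 0).val := by
    by_contra hcon
    push_neg at hcon
    exact absurd v01 (asymm (lt_C1 σ' hcon h1'))
  have hall : ∀ a : Fin 3, j < (f a).val := by
    intro a
    have := hf.monotone (Fin.zero_le a)
    rw [Fin.le_def] at this
    omega
  exact h1 (tail_transfer σ' f hf hall hc)

lemma buildp_avoids213 (h1 : Avoids σ' p213) : Avoids (buildp j m σ') p213 := by
  rintro ⟨f, hf, hc⟩
  have m01 : f 0 < f 1 := hf (by decide)
  have m12 : f 1 < f 2 := hf (by decide)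
  have v10 : buildp j m σ' (f 1) < buildp j m σ' (f 0) := (hc 1 0).2 (by rw [p213_lt]; decide)
  have v02 : buildp j m σ' (f 0) < buildp j m σ' (f 2) := (hc 0 2).2 (by rw [p213_lt]; decide)
  have h0' : j < (f 0).val := by
    by_contra hcon
    push_neg at hcon
    by_cases h2 : (f 2).val ≤ j
    · -- all three in block
      have hm01 := m01; have hm12 := m12
      rw [Fin.lt_def] at hm01 hm12
      by_cases h00 : (f 0).val = 0
      · exact absurd v10 (asymm (lt_C3 σ' h00 (by omega) (by omega)))
      · exact absurd v02 (asymm (lt_C2 σ' (by omega) (m01.trans m12) h2))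
    · exact absurd v02 (asymm (lt_C1 σ' hcon (by omega)))
  have hall : ∀ a : Fin 3, j < (f a).val := by
    intro a
    have := hf.monotone (Fin.zero_le a)
    rw [Fin.le_def] at this
    omega
  exact h1 (tail_transfer σ' f hf hall hc)

lemma buildp_avoidsQ {k : ℕ} (hk : 1 ≤ k) (hjk : j < k) (h1 : Avoids σ' (qpat k)) :
    Avoids (buildp j m σ') (qpat k) := by
  rintro ⟨f, hf, hc⟩
  have hv : ∀ b : Fin (k+1), b.val ≠ 0 → buildp j m σ' (f 0) < buildp j m σ' (f b) := fun b hb =>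
    (hc 0 b).2 ((qpat_lt k 0 b).2 ⟨hb, Or.inl (by simp)⟩)
  have h1' : j < (f ⟨1, by omega⟩).val := by
    by_contra hcon
    push_neg at hcon
    have m01 : f 0 < f ⟨1, by omega⟩ := hf (by rw [Fin.lt_def]; simp)
    have m01v := m01
    rw [Fin.lt_def] at m01v
    by_cases h00 : (f 0).val = 0
    · have hblock : ∀ b : Fin (k+1), b.val ≠ 0 → (f b).val ≤ j := by
        intro b hb
        by_contra hbc
        push_neg at hbc
        exact absurd (hv b hb) (asymm (lt_C1 σ' (by omega) hbc))
      have hlast : k ≤ (f ⟨k, by omega⟩).val := by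
        simpa using strictMono_val_le hf ⟨k, by omega⟩
      have := hblock ⟨k, by omega⟩ (by simp only [Fin.val_mk]; omega)
      omega
    · exact absurd (hv ⟨1, by omega⟩ (by simp)) (asymm (lt_C2 σ' (by omega) m01 hcon))
  have hall : ∀ a : Fin (k+1), j < (f a).val := by
    intro a
    by_cases ha : a.val = 0
    · have ha0 : a = 0 := Fin.ext (by simpa using ha)
      subst ha0
      by_contra hcon
      push_neg at hcon
      exact absurd (hv ⟨1, by omega⟩ (by simp)) (asymm (lt_C1 σ' hcon h1'))
    · have hle : f ⟨1, by omega⟩ ≤ f a := hf.monotone (by rw [Fin.le_def]; simp only [Fin.val_mk]; omega)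
      rw [Fin.le_def] at hle
      omega
  exact h1 (tail_transfer σ' f hf hall hc)

section Structure

variable {n : ℕ} {σ : Equiv.Perm (Fin (n+1))}

lemma chainA (h1 : Avoids σ p123) (h2 : Avoids σ p213) {p q : Fin (n+1)} (hp : 0 < p.val)
    (hpq : p < q) (hq : σ 0 < σ q) : σ q < σ p := by
  have hne0 : (0 : Fin (n+1)) < p := by rw [Fin.lt_def]; simpa using hp
  rcases lt_trichotomy (σ p) (σ q) with h | h | h
  · rcases lt_trichotomy (σ 0) (σ p) with h' | h' | h'
    · exact absurd (contains123 hne0 hpq h' h) h1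
    · exact absurd (σ.injective h') (ne_of_lt hne0)
    · exact absurd (contains213 hne0 hpq h' hq) h2
  · exact absurd (σ.injective h) (ne_of_lt hpq)
  · exact h

lemma posAbove (h1 : Avoids σ p123) (h2 : Avoids σ p213) (p : Fin (n+1)) :
    σ 0 < σ p ↔ (1 ≤ p.val ∧ p.val ≤ n - (σ 0).val) := by
  classical
  set c := (σ 0).val with hcdef
  set U : Finset (Fin (n+1)) := Finset.univ.filter (fun q => σ 0 < σ q) with hU
  have hmem : ∀ q, q ∈ U ↔ σ 0 < σ q := by intro q; simp [hU]
  have hposU : ∀ q ∈ U, 1 ≤ q.val := by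
    intro q hq
    rcases Nat.eq_zero_or_pos q.val with h0 | h
    · have hq0 : q = 0 := Fin.ext (by simpa using h0)
      rw [hmem, hq0] at hq
      exact absurd hq (lt_irrefl _)
    · exact h
  have hcard : U.card = n - c := by
    have himg : U = (Finset.Ioi (σ 0)).image σ.symm := by
      ext q
      simp only [hmem q, Finset.mem_image, Finset.mem_Ioi]
      constructor
      · intro h
        exact ⟨σ q, h, σ.symm_apply_apply q⟩
      · rintro ⟨v, hv, rfl⟩
        rwa [σ.apply_symm_apply]
    rw [himg, Finset.card_image_of_injective _ σ.symm.injective, Fin.card_Ioi]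
    omega
  have hdc : ∀ q ∈ U, ∀ r : Fin (n+1), 0 < r.val → r ≤ q → r ∈ U := by
    intro q hq r hr hrq
    rcases eq_or_lt_of_le hrq with rfl | hlt
    · exact hq
    · rw [hmem] at hq ⊢
      exact lt_trans hq (chainA h1 h2 hr hlt hq)
  have hle : ∀ q ∈ U, q.val ≤ n - c := by
    intro q hq
    by_contra hcon
    push_neg at hcon
    have hq1 := hposU q hq
    have hqn := q.isLt
    have hsub : Finset.Icc (⟨1, by omega⟩ : Fin (n+1)) q ⊆ U := by
      intro r hr
      rw [Finset.mem_Icc] at hr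
      have hr1 : 1 ≤ r.val := by
        have := hr.1
        rw [Fin.le_def] at this
        simpa using this
      exact hdc q hq r (by omega) hr.2
    have hcc := Finset.card_le_card hsub
    rw [Fin.card_Icc, hcard] at hcc
    simp only [Fin.val_mk] at hcc
    omega
  constructor
  · intro h
    have hq : p ∈ U := (hmem p).2 h
    exact ⟨hposU p hq, hle p hq⟩
  · rintro ⟨hp1, hp2⟩
    have hpn := p.isLt
    have hsub2 : U ⊆ Finset.Icc (⟨1, by omega⟩ : Fin (n+1)) ⟨n - c, by omega⟩ := by
      intro q hq
      rw [Finset.mem_Icc, Fin.le_def, Fin.le_def]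
      simp only [Fin.val_mk]
      exact ⟨hposU q hq, hle q hq⟩
    have hUeq : U = Finset.Icc (⟨1, by omega⟩ : Fin (n+1)) ⟨n - c, by omega⟩ := by
      apply Finset.eq_of_subset_of_card_le hsub2
      rw [Fin.card_Icc, hcard]
      simp only [Fin.val_mk]
      omega
    rw [← hmem, hUeq, Finset.mem_Icc, Fin.le_def, Fin.le_def]
    simp only [Fin.val_mk]
    exact ⟨hp1, hp2⟩

lemma struct2 (h1 : Avoids σ p123) (h2 : Avoids σ p213) {p q : Fin (n+1)} (hp : 1 ≤ p.val)
    (hpq : p < q) (hq : q.val ≤ n - (σ 0).val) : σ q < σ p := by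
  have hq1 : 1 ≤ q.val := by
    have := hpq
    rw [Fin.lt_def] at this
    omega
  exact chainA h1 h2 (by omega) hpq ((posAbove h1 h2 q).2 ⟨hq1, hq⟩)

lemma struct3 (h1 : Avoids σ p123) (h2 : Avoids σ p213) {q : Fin (n+1)}
    (hq : n - (σ 0).val < q.val) : σ q < σ 0 := by
  rcases lt_trichotomy (σ q) (σ 0) with h | h | h
  · exact h
  · exact absurd (σ.injective h) (by
      intro e
      rw [e] at hq
      simp at hq)
  · have := ((posAbove h1 h2 q).1 h).2
    omega

lemma chain_desc (h1 : Avoids σ p123) (h2 : Avoids σ p213) :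
    ∀ d (p q : Fin (n+1)), 1 ≤ p.val → p.val + d = q.val → q.val ≤ n - (σ 0).val →
      (σ q).val + d ≤ (σ p).val := by
  intro d
  induction d with
  | zero =>
    intro p q hp hpq hq
    have : p = q := Fin.ext (by omega)
    subst this
    omega
  | succ s ih =>
    intro p q hp hpq hq
    have hq1 : q.val - 1 < n + 1 := by have := q.isLt; omega
    set q' : Fin (n+1) := ⟨q.val - 1, hq1⟩ with hq'def
    have hq'v : q'.val = q.val - 1 := rfl
    have hA := ih p q' hp (by omega) (by omega)
    have hB : σ q < σ q' := struct2 h1 h2 (by omega) (by rw [Fin.lt_def]; omega) hq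
    rw [Fin.lt_def] at hB
    omega

lemma val_eq (h1 : Avoids σ p123) (h2 : Avoids σ p213) {p : Fin (n+1)} (hp1 : 1 ≤ p.val)
    (hp2 : p.val ≤ n - (σ 0).val) : (σ p).val = n + 1 - p.val := by
  have hcn : (σ 0).val ≤ n := by have := (σ 0).isLt; omega
  have hpn := p.isLt
  have h1n : 1 < n + 1 := by omega
  have hjn : n - (σ 0).val < n + 1 := by omega
  set p1 : Fin (n+1) := ⟨1, h1n⟩ with hp1def
  set pj : Fin (n+1) := ⟨n - (σ 0).val, hjn⟩ with hpjdef
  have hp1v : p1.val = 1 := rfl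
  have hpjv : pj.val = n - (σ 0).val := rfl
  have hup := chain_desc h1 h2 (p.val - 1) p1 p (by omega) (by omega) (by omega)
  have hlow := chain_desc h1 h2 ((n - (σ 0).val) - p.val) p pj hp1 (by omega) (by omega)
  have hjpos : σ 0 < σ pj := (posAbove h1 h2 pj).2 (by omega)
  rw [Fin.lt_def] at hjpos
  have hub : (σ p1).val ≤ n := by have := (σ p1).isLt; omega
  omega

lemma j_lt_k {k : ℕ} (hk1 : 1 ≤ k) (h1 : Avoids σ p123) (h2 : Avoids σ p213)
    (h3 : Avoids σ (qpat k)) : n - (σ 0).val < k := by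
  by_contra hcon
  push_neg at hcon
  have hjn : n - (σ 0).val ≤ n := Nat.sub_le _ _
  have hc0 : (σ 0).val ≤ n := by have := (σ 0).isLt; omega
  apply h3
  have hbd : ∀ t : Fin (k+1), t.val < n + 1 := by
    intro t
    have := t.isLt
    omega
  refine ⟨fun t => ⟨t.val, hbd t⟩, ?_, ?_⟩
  · intro a b hab
    rw [Fin.lt_def] at hab ⊢
    simpa using hab
  · intro a b
    set e : Fin (k+1) → Fin (n+1) := fun t => ⟨t.val, hbd t⟩ with hedef
    have hE : ∀ t, (e t).val = t.val := fun t => rfl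
    rw [qpat_lt]
    have ha' := a.isLt
    have hb' := b.isLt
    have hS : ∀ t : Fin (k+1), t.val ≠ 0 → σ 0 < σ (e t) := by
      intro t ht
      have hEt := hE t
      have htl := t.isLt
      exact (posAbove h1 h2 (e t)).2 (by omega)
    have hzero : ∀ t : Fin (k+1), t.val = 0 → e t = 0 := by
      intro t ht
      exact Fin.ext (by rw [hE, ht]; simp)
    have hD : ∀ s t : Fin (k+1), s.val ≠ 0 → t.val ≠ 0 → t.val < s.val → σ (e s) < σ (e t) := by
      intro s t hs ht hst
      have hEs := hE s
      have hEt := hE t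
      have hsl := s.isLt
      refine struct2 h1 h2 (p := e t) (q := e s) ?_ ?_ ?_
      · omega
      · rw [Fin.lt_def]; omega
      · omega
    by_cases ha : a.val = 0 <;> by_cases hb : b.val = 0
    · rw [hzero a ha, hzero b hb]
      simp [ha, hb]
    · rw [hzero a ha]
      simp only [ha, hb]
      constructor
      · intro h
        exact ⟨hb, Or.inl trivial⟩
      · intro h
        exact hS b hb
    · rw [hzero b hb]
      constructor
      · intro h
        exact absurd (lt_trans h (hS a ha)) (lt_irrefl _)
      · rintro ⟨h, -⟩
        exact absurd hb h
    · constructor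
      · intro h
        refine ⟨hb, Or.inr ?_⟩
        rcases lt_trichotomy a.val b.val with hab | hab | hab
        · exact absurd (lt_trans h (hD b a hb ha hab)) (lt_irrefl _)
        · have : e a = e b := Fin.ext (by rw [hE, hE]; exact hab)
          rw [this] at h
          exact absurd h (lt_irrefl _)
        · exact hab
      · rintro ⟨-, hab | hab⟩
        · exact absurd hab ha
        · exact hD a b ha hb hab

end Structure

lemma bfun_val2' {j m : ℕ} (σ' : Equiv.Perm (Fin m)) {P : Fin (j+1+m)} {q : Fin m}
    (hP : P.val = j+1+q.val) : (bfun j m σ' P).val = (σ' q).val := by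
  obtain ⟨qv, hq⟩ := q
  simp only [Fin.val_mk] at hP
  unfold bfun
  have h0 : ¬ P.val = 0 := by omega
  have h1 : ¬ P.val ≤ j := by omega
  rw [dif_neg h0, dif_neg h1]
  have he : P.val - (j+1) = qv := by omega
  simp only [he]

lemma permCongr_val {N M : ℕ} (h : N = M) (π : Equiv.Perm (Fin N)) (x : Fin M) (y : Fin N)
    (hxy : y.val = x.val) : (((finCongr h).permCongr π) x).val = (π y).val := by
  subst h
  have : y = x := Fin.ext hxy
  subst this
  simp [Equiv.permCongr_apply]

lemma contains_permCongr {N M kk : ℕ} (h : N = M) (π : Equiv.Perm (Fin N)) (τ : Fin kk → ℕ) :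
    Contains ((finCongr h).permCongr π) τ ↔ Contains π τ := by
  subst h
  have he : (finCongr rfl).permCongr π = π := by
    apply Equiv.ext
    intro x
    simp [Equiv.permCongr_apply]
  rw [he]

lemma natCardSigma {M : ℕ} (T : Fin M → Type) [∀ j, Finite (T j)] :
    Nat.card (Σ j, T j) = ∑ j : Fin M, Nat.card (T j) := by
  letI : ∀ j, Fintype (T j) := fun j => Fintype.ofFinite _
  simp [Nat.card_eq_fintype_card, Fintype.card_sigma]

/-- number of avoiders -/
noncomputable def aCount (k n : ℕ) : ℕ :=
  Nat.card {σ : Equiv.Perm (Fin n) // Avoids σ p123 ∧ Avoids σ p213 ∧ Avoids σ (qpat k)}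

set_option maxHeartbeats 1000000 in
lemma card_rec (k : ℕ) (hk : 1 ≤ k) (n : ℕ) :
    aCount k (n+1) = ∑ j ∈ Finset.range (min k (n+1)), aCount k (n - j) := by
  classical
  set T : Fin (min k (n+1)) → Type := fun j =>
    {σ' : Equiv.Perm (Fin (n - j.val)) //
      Avoids σ' p123 ∧ Avoids σ' p213 ∧ Avoids σ' (qpat k)} with hT
  have hjle : ∀ j : Fin (min k (n+1)), j.val ≤ n ∧ j.val < k := fun j => by
    have := j.isLt; omega
  have hcast : ∀ j : Fin (min k (n+1)), j.val + 1 + (n - j.val) = n + 1 := fun j => by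
    have := (hjle j).1; omega
  let G : (Σ j, T j) → {σ : Equiv.Perm (Fin (n+1)) //
      Avoids σ p123 ∧ Avoids σ p213 ∧ Avoids σ (qpat k)} :=
    fun x => ⟨(finCongr (hcast x.1)).permCongr (buildp x.1.val (n - x.1.val) x.2.val), by
      obtain ⟨h1, h2, h3⟩ := x.2.2
      exact ⟨fun hc => buildp_avoids123 _ h1 ((contains_permCongr _ _ _).1 hc),
        fun hc => buildp_avoids213 _ h2 ((contains_permCongr _ _ _).1 hc),
        fun hc => buildp_avoidsQ _ hk (hjle x.1).2 h3 ((contains_permCongr _ _ _).1 hc)⟩⟩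
  have hGval : ∀ (x : Σ j, T j) (p : Fin (n+1)),
      ((G x).val p).val = (bfun x.1.val (n - x.1.val) x.2.val ⟨p.val, by
        have := p.isLt; have := hcast x.1; omega⟩).val := by
    intro x p
    exact permCongr_val (hcast x.1) _ p _ rfl
  have hGinj : Function.Injective G := by
    intro x y hxy
    have hv : ∀ p : Fin (n+1), ((G x).val p).val = ((G y).val p).val := fun p => by rw [hxy]
    have h0 : x.1 = y.1 := by
      have := hv ⟨0, by omega⟩
      rw [hGval, hGval] at this
      rw [bfun_val0 _ rfl, bfun_val0 _ rfl] at this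
      have hx := (hjle x.1).1
      have hy := (hjle y.1).1
      exact Fin.ext (by omega)
    obtain ⟨j, s⟩ := x
    obtain ⟨j2, s2⟩ := y
    simp only at h0
    subst h0
    have hs : s = s2 := by
      apply Subtype.ext
      apply Equiv.ext
      intro q
      apply Fin.ext
      have hq := q.isLt
      have hj := (hjle j).1
      have := hv ⟨j.val + 1 + q.val, by omega⟩
      rw [hGval, hGval] at this
      rw [bfun_val2' s.val (q := q) (by simp only [Fin.val_mk]),
          bfun_val2' s2.val (q := q) (by simp only [Fin.val_mk])] at this
      exact this
    rw [hs]
  have hGsurj : Function.Surjective G := by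
    rintro ⟨σ, hav1, hav2, hav3⟩
    have hcn : (σ 0).val ≤ n := by have := (σ 0).isLt; omega
    set c := (σ 0).val with hcdef
    set j := n - c with hjdef
    have hjk : j < k := j_lt_k hk hav1 hav2 hav3
    have hjn : j ≤ n := Nat.sub_le n c
    have hjM : j < min k (n+1) := by omega
    have hpos : ∀ q : Fin (n - j), j + 1 + q.val < n + 1 := by
      intro q; have := q.isLt; omega
    have htail : ∀ q : Fin (n - j), (σ ⟨j+1+q.val, hpos q⟩).val < n - j := by
      intro q
      have h3 := struct3 hav1 hav2 (q := ⟨j+1+q.val, hpos q⟩) (by simp only [Fin.val_mk]; omega)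
      rw [Fin.lt_def] at h3
      omega
    have tinj : Function.Injective (fun q : Fin (n - j) => (⟨(σ ⟨j+1+q.val, hpos q⟩).val, htail q⟩ : Fin (n - j))) := by
      intro q1 q2 hq
      replace hq := congrArg Fin.val hq
      simp only [Fin.val_mk] at hq
      have h2 := σ.injective (Fin.ext hq)
      replace h2 := congrArg Fin.val h2
      simp only [Fin.val_mk] at h2
      exact Fin.ext (by omega)
    set σ' : Equiv.Perm (Fin (n - j)) :=
      Equiv.ofBijective _ (Finite.injective_iff_bijective.1 tinj) with hσ'def
    have hσ'val : ∀ q, (σ' q).val = (σ ⟨j+1+q.val, hpos q⟩).val := fun q => rfl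
    have hσ'val2 : ∀ (q : Fin (n-j)) (P : Fin (n+1)), P.val = j+1+q.val →
        (σ' q).val = (σ P).val := by
      intro q P hP
      have hPq : P = ⟨j+1+q.val, hpos q⟩ := Fin.ext (by simp only [Fin.val_mk]; omega)
      rw [hPq, hσ'val]
    have hemb : ∀ (kk : ℕ) (τ : Fin kk → ℕ), Contains σ' τ → Contains σ τ := by
      intro kk τ
      apply contains_of_embed (e := fun q => ⟨j+1+q.val, hpos q⟩)
      · intro q1 q2 hq
        rw [Fin.lt_def] at hq ⊢
        simp only [Fin.val_mk]
        omega
      · intro a b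
        rw [Fin.lt_def, Fin.lt_def, ← hσ'val, ← hσ'val]
    refine ⟨⟨⟨j, hjM⟩, ⟨σ', fun hc => hav1 (hemb _ _ hc), fun hc => hav2 (hemb _ _ hc),
      fun hc => hav3 (hemb _ _ hc)⟩⟩, ?_⟩
    apply Subtype.ext
    apply Equiv.ext
    intro p
    apply Fin.ext
    rw [hGval]
    simp only
    by_cases hp0 : p.val = 0
    · rw [bfun_val0 _ (by simp only [Fin.val_mk]; exact hp0)]
      have hp : p = 0 := Fin.ext (by simpa using hp0)
      rw [hp]
      omega
    · by_cases hpj : p.val ≤ j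
      · rw [bfun_val1 _ (by simp only [Fin.val_mk]; exact hp0) (by simp only [Fin.val_mk]; exact hpj)]
        rw [val_eq hav1 hav2 (by omega) (by omega)]
        have := p.isLt
        simp only [Fin.val_mk]
        omega
      · have hpmk : p.val < j + 1 + (n - j) := by have := p.isLt; omega
        rw [bfun_val2' σ' (P := ⟨p.val, hpmk⟩) (q := ⟨p.val - (j+1), by have := p.isLt; omega⟩)
          (by show p.val = j + 1 + (p.val - (j+1)); omega)]
        exact hσ'val2 ⟨p.val - (j+1), by have := p.isLt; omega⟩ p (by show p.val = j + 1 + (p.val - (j+1)); omega)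
  have hkey := Nat.card_eq_of_bijective G ⟨hGinj, hGsurj⟩
  have hsig := natCardSigma T
  rw [hsig] at hkey
  rw [aCount, ← hkey]
  rw [← Fin.sum_univ_eq_sum_range (fun j => aCount k (n - j)) (min k (n+1))]
  rfl

lemma aCount_zero (k : ℕ) : aCount k 0 = 1 := by
  have h : ∀ σ : Equiv.Perm (Fin 0), Avoids σ p123 ∧ Avoids σ p213 ∧ Avoids σ (qpat k) :=
    fun σ => ⟨avoids_small (by omega) σ _, avoids_small (by omega) σ _,
      avoids_small (by omega) σ _⟩
  rw [aCount, Nat.card_congr (Equiv.subtypeUnivEquiv h)]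
  simp [Nat.card_eq_fintype_card]

lemma aCount_one (k : ℕ) (hk : 1 ≤ k) : aCount k 1 = 1 := by
  have h1 : aCount k 1 = ∑ j ∈ Finset.range (min k 1), aCount k (0 - j) := card_rec k hk 0
  rw [min_eq_right (by omega), Finset.sum_range_one] at h1
  rw [h1]
  exact aCount_zero k

lemma recD1 (k t : ℕ) (hk : 1 ≤ k) (ht : t + 2 ≤ k) :
    aCount k (t+2) = 2 * aCount k (t+1) := by
  have h1 : aCount k (t+2) = ∑ j ∈ Finset.range (min k (t+2)), aCount k (t+1-j) :=
    card_rec k hk (t+1)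
  have h2 : aCount k (t+1) = ∑ j ∈ Finset.range (min k (t+1)), aCount k (t-j) :=
    card_rec k hk t
  rw [min_eq_right (by omega)] at h1
  rw [min_eq_right (by omega)] at h2
  rw [Finset.sum_range_succ'] at h1
  simp only [show ∀ i : ℕ, t + 1 - (i+1) = t - i from fun i => by omega, Nat.sub_zero] at h1
  omega

lemma recD2 (k t : ℕ) (hk : 1 ≤ k) (ht : k ≤ t + 1) :
    aCount k (t+2) + aCount k (t+1-k) = 2 * aCount k (t+1) := by
  obtain ⟨s, rfl⟩ : ∃ s, k = s + 1 := ⟨k-1, by omega⟩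
  have h1 : aCount (s+1) (t+2) = ∑ j ∈ Finset.range (min (s+1) (t+2)), aCount (s+1) (t+1-j) :=
    card_rec (s+1) hk (t+1)
  have h2 : aCount (s+1) (t+1) = ∑ j ∈ Finset.range (min (s+1) (t+1)), aCount (s+1) (t-j) :=
    card_rec (s+1) hk t
  rw [min_eq_left (by omega)] at h1
  rw [min_eq_left (by omega)] at h2
  rw [Finset.sum_range_succ'] at h1
  rw [Finset.sum_range_succ] at h2
  simp only [show ∀ i : ℕ, t + 1 - (i+1) = t - i from fun i => by omega, Nat.sub_zero] at h1
  rw [show t + 1 - (s+1) = t - s from by omega]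
  omega

lemma main_gf (k : ℕ) (hk : 2 ≤ k) :
    (PowerSeries.mk fun n => ((aCount k n : ℤ))) *
      (1 - 2 * PowerSeries.X + PowerSeries.X ^ (k + 1)) = 1 - PowerSeries.X := by
  have hk1 : 1 ≤ k := by omega
  set f : PowerSeries ℤ := PowerSeries.mk fun n => ((aCount k n : ℤ)) with hf
  have hC : (PowerSeries.C (R := ℤ)) 2 = 2 := by simp
  have expand : f * (1 - 2 * PowerSeries.X + PowerSeries.X ^ (k + 1)) =
      f - (f * PowerSeries.X ^ 1) * (PowerSeries.C (R := ℤ) 2) + f * PowerSeries.X ^ (k+1) := by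
    rw [hC]; ring
  rw [expand]
  apply PowerSeries.ext
  intro n
  rw [map_add, map_sub, PowerSeries.coeff_mul_C, PowerSeries.coeff_mul_X_pow',
    PowerSeries.coeff_mul_X_pow', map_sub, PowerSeries.coeff_one, PowerSeries.coeff_X,
    hf, PowerSeries.coeff_mk]
  match n with
  | 0 =>
    rw [if_neg (show ¬ (1 ≤ 0) by omega), if_neg (show ¬ (k + 1 ≤ 0) by omega),
      if_pos (show (0:ℕ) = 0 from rfl), if_neg (show ¬ ((0:ℕ) = 1) by omega)]
    rw [aCount_zero]
    norm_num
  | 1 =>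
    rw [if_pos (show (1:ℕ) ≤ 1 from le_refl 1), if_neg (show ¬ (k + 1 ≤ 1) by omega),
      if_neg (show ¬ ((1:ℕ) = 0) by omega), if_pos (show (1:ℕ) = 1 from rfl),
      PowerSeries.coeff_mk]
    simp [aCount_one k hk1, aCount_zero]
  | (t+2) =>
    rw [if_pos (show 1 ≤ t + 2 by omega), if_neg (show ¬ (t + 2 = 0) by omega),
      if_neg (show ¬ (t + 2 = 1) by omega), PowerSeries.coeff_mk,
      show t + 2 - 1 = t + 1 from by omega]
    by_cases ht : k + 1 ≤ t + 2
    · rw [if_pos ht, PowerSeries.coeff_mk, show t + 2 - (k+1) = t + 1 - k from by omega]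
      have hr := recD2 k t hk1 (by omega)
      have hr' : (aCount k (t+2) : ℤ) + (aCount k (t+1-k) : ℤ) = 2 * (aCount k (t+1) : ℤ) := by
        exact_mod_cast congrArg (fun z : ℕ => (z : ℤ)) hr
      linarith
    · rw [if_neg ht]
      have hr := recD1 k t hk1 (by omega)
      have hr' : (aCount k (t+2) : ℤ) = 2 * (aCount k (t+1) : ℤ) := by
        exact_mod_cast congrArg (fun z : ℕ => (z : ℤ)) hr
      linarith

theorem stmt6 (k : ℕ) (hk : 2 ≤ k) :
    (PowerSeries.mk fun n => ((Nat.card {σ : Equiv.Perm (Fin n) //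
        Avoids σ p123 ∧ Avoids σ p213 ∧ Avoids σ (qpat k)} : ℕ) : ℤ)) *
      (1 - 2 * PowerSeries.X + PowerSeries.X ^ (k + 1)) = 1 - PowerSeries.X := by
  exact main_gf k hk
end

section
/- For every natural number n, the number of permutations of {1,…,n} simultaneously avoiding the patterns 123, 213 and 1432 equals the n-th Tribonacci number c_n, where c_0 = c_1 = 1, c_2 = 2 and c_n = c_{n-1} + c_{n-2} + c_{n-3} for n ≥ 3. -/
/-- Tribonacci numbers with `c 0 = c 1 = 1`, `c 2 = 2`. -/
def Trib : ℕ → ℕ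
  | 0 => 1
  | 1 => 1
  | 2 => 2
  | n + 3 => Trib (n + 2) + Trib (n + 1) + Trib n

namespace Stmt7Aux

open Equiv Fin

/-- prepend the max -/
def e1 {m : ℕ} (σ : Equiv.Perm (Fin m)) : Equiv.Perm (Fin (m+1)) :=
  (finSuccEquiv m).trans ((Equiv.optionCongr σ).trans finSuccEquivLast.symm)

@[simp] lemma e1_zero {m : ℕ} (σ : Equiv.Perm (Fin m)) : e1 σ 0 = Fin.last m := by
  simp [e1, finSuccEquiv_zero]

@[simp] lemma e1_succ {m : ℕ} (σ : Equiv.Perm (Fin m)) (i : Fin m) :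
    e1 σ i.succ = (σ i).castSucc := by
  simp [e1, finSuccEquiv_succ, finSuccEquivLast_symm_some]

lemma e1_inj {m : ℕ} : Function.Injective (@e1 m) := by
  intro σ σ' h
  apply Equiv.ext (fun i => ?_)
  have := congrArg (fun π => (π : Equiv.Perm (Fin (m+1))) i.succ) h
  simpa [Fin.castSucc_inj] using this

end Stmt7Aux

namespace Stmt7Aux
open Equiv Fin

lemma fin_one_succ {m : ℕ} : (1 : Fin (m+2)) = (0 : Fin (m+1)).succ := by
  ext; simp

lemma fin_two_succ {m : ℕ} : (2 : Fin (m+3)) = (1 : Fin (m+2)).succ := by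
  ext; simp [Fin.val_two]

example {m : ℕ} : ((2 : Fin (m+3)) : ℕ) = 2 := by simp

end Stmt7Aux

namespace Stmt7Aux
open Equiv Fin

def e2 {m : ℕ} (σ : Equiv.Perm (Fin m)) : Equiv.Perm (Fin (m+2)) :=
  e1 (e1 σ) * Equiv.swap 0 1

def e3 {m : ℕ} (σ : Equiv.Perm (Fin m)) : Equiv.Perm (Fin (m+3)) :=
  e1 (e1 (e1 σ)) * (Equiv.swap 0 1 * Equiv.swap 0 2)

@[simp] lemma e1_val_zero {m : ℕ} (σ : Equiv.Perm (Fin m)) : ((e1 σ) 0 : Fin (m+1)).val = m := by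
  simp

@[simp] lemma e1_val_succ {m : ℕ} (σ : Equiv.Perm (Fin m)) (i : Fin m) :
    ((e1 σ) i.succ).val = (σ i).val := by simp

@[simp] lemma e2_val_zero {m : ℕ} (σ : Equiv.Perm (Fin m)) : ((e2 σ) 0).val = m := by
  have h0 : (Equiv.swap (0 : Fin (m+2)) 1) 0 = 1 := Equiv.swap_apply_left _ _
  rw [e2, Perm.mul_apply, h0, fin_one_succ, e1_succ, e1_zero]; simp

@[simp] lemma e2_val_one {m : ℕ} (σ : Equiv.Perm (Fin m)) : ((e2 σ) 1).val = m + 1 := by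
  have h0 : (Equiv.swap (0 : Fin (m+2)) 1) 1 = 0 := Equiv.swap_apply_right _ _
  simp [e2, Perm.mul_apply, h0]

@[simp] lemma e2_val_succ {m : ℕ} (σ : Equiv.Perm (Fin m)) (i : Fin m) :
    ((e2 σ) i.succ.succ).val = (σ i).val := by
  have h0 : (Equiv.swap (0 : Fin (m+2)) 1) i.succ.succ = i.succ.succ :=
    Equiv.swap_apply_of_ne_of_ne (Fin.succ_ne_zero _)
      (by rw [fin_one_succ]; exact fun h => Fin.succ_ne_zero _ (Fin.succ_injective _ h))
  simp [e2, Perm.mul_apply, h0]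

@[simp] lemma e3_val_zero {m : ℕ} (σ : Equiv.Perm (Fin m)) : ((e3 σ) 0).val = m := by
  have h0 : (Equiv.swap (0 : Fin (m+3)) 2) 0 = 2 := Equiv.swap_apply_left _ _
  have h1 : (Equiv.swap (0 : Fin (m+3)) 1) 2 = 2 :=
    Equiv.swap_apply_of_ne_of_ne (by simp [Fin.ext_iff, Fin.val_two]; rw [Nat.mod_eq_of_lt (by omega)]; omega) (by simp [Fin.ext_iff, Fin.val_two]; rw [Nat.mod_eq_of_lt (by omega)]; omega)
  rw [e3, Perm.mul_apply, Perm.mul_apply, h0, h1, fin_two_succ, e1_succ, fin_one_succ, e1_succ, e1_zero]; simp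

@[simp] lemma e3_val_one {m : ℕ} (σ : Equiv.Perm (Fin m)) : ((e3 σ) 1).val = m + 2 := by
  have h0 : (Equiv.swap (0 : Fin (m+3)) 2) 1 = 1 :=
    Equiv.swap_apply_of_ne_of_ne (by simp [Fin.ext_iff]) (by simp [Fin.ext_iff, Fin.val_two]; rw [Nat.mod_eq_of_lt (by omega)]; omega)
  have h1 : (Equiv.swap (0 : Fin (m+3)) 1) 1 = 0 := Equiv.swap_apply_right _ _
  simp [e3, Perm.mul_apply, h0, h1]

@[simp] lemma e3_val_two {m : ℕ} (σ : Equiv.Perm (Fin m)) : ((e3 σ) 2).val = m + 1 := by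
  have h0 : (Equiv.swap (0 : Fin (m+3)) 2) 2 = 0 := Equiv.swap_apply_right _ _
  have h1 : (Equiv.swap (0 : Fin (m+3)) 1) 0 = 1 := Equiv.swap_apply_left _ _
  rw [e3, Perm.mul_apply, Perm.mul_apply, h0, h1, fin_one_succ, e1_succ, e1_zero]; simp

@[simp] lemma e3_val_succ {m : ℕ} (σ : Equiv.Perm (Fin m)) (i : Fin m) :
    ((e3 σ) i.succ.succ.succ).val = (σ i).val := by
  have hne0 : i.succ.succ.succ ≠ (0 : Fin (m+3)) := Fin.succ_ne_zero _
  have hne1 : i.succ.succ.succ ≠ (1 : Fin (m+3)) := by simp [Fin.ext_iff]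
  have hne2 : i.succ.succ.succ ≠ (2 : Fin (m+3)) := by simp [Fin.ext_iff, Fin.val_two]; rw [Nat.mod_eq_of_lt (by omega)]; omega
  have h0 : (Equiv.swap (0 : Fin (m+3)) 2) i.succ.succ.succ = i.succ.succ.succ :=
    Equiv.swap_apply_of_ne_of_ne hne0 hne2
  have h1 : (Equiv.swap (0 : Fin (m+3)) 1) i.succ.succ.succ = i.succ.succ.succ :=
    Equiv.swap_apply_of_ne_of_ne hne0 hne1
  simp [e3, Perm.mul_apply, h0, h1]

end Stmt7Aux

namespace Stmt7Aux
open Equiv Fin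

lemma contains_up1 {m k : ℕ} {σ : Equiv.Perm (Fin m)} {τ : Fin k → ℕ}
    (h : Contains σ τ) : Contains (e1 σ) τ := by
  obtain ⟨f, hf, hv⟩ := h
  exact ⟨fun a => (f a).succ, fun a b hab => Fin.succ_lt_succ_iff.mpr (hf hab),
    fun a b => by rw [e1_succ, e1_succ, Fin.castSucc_lt_castSucc_iff]; exact hv a b⟩

lemma contains_down1 {m k : ℕ} {σ : Equiv.Perm (Fin m)} {τ : Fin (k+1) → ℕ}
    (hb : ∃ b, τ 0 < τ b) (h : Contains (e1 σ) τ) : Contains σ τ := by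
  obtain ⟨f, hf, hv⟩ := h
  obtain ⟨b, hb⟩ := hb
  have hf0 : f 0 ≠ 0 := by
    intro h0
    have := (hv 0 b).mpr hb
    rw [h0, e1_zero] at this
    exact absurd this (Fin.not_lt.mpr (Fin.le_last _))
  have hall : ∀ a, f a ≠ 0 := by
    intro a
    rcases eq_or_lt_of_le (Fin.zero_le a) with h0 | h0
    · rwa [← h0]
    · have : f 0 < f a := hf h0
      exact Fin.pos_iff_ne_zero.mp (lt_of_le_of_lt (Fin.zero_le _) this)
  refine ⟨fun a => (f a).pred (hall a), ?_, ?_⟩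
  · intro a b hab
    exact Fin.pred_lt_pred_iff.mpr (hf hab)
  · intro a b
    have := hv a b
    rw [← Fin.succ_pred (f a) (hall a), ← Fin.succ_pred (f b) (hall b)] at this
    rwa [e1_succ, e1_succ, Fin.castSucc_lt_castSucc_iff] at this

lemma contains_e1_iff {m k : ℕ} {σ : Equiv.Perm (Fin m)} {τ : Fin (k+1) → ℕ}
    (hb : ∃ b, τ 0 < τ b) : Contains (e1 σ) τ ↔ Contains σ τ :=
  ⟨contains_down1 hb, contains_up1⟩

end Stmt7Aux

namespace Stmt7Aux
open Equiv Fin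

lemma two_le {m : ℕ} (j : Fin (m+2)) (h : 2 ≤ j.val) : ∃ i : Fin m, j = i.succ.succ :=
  ⟨⟨j.val - 2, by omega⟩, by ext; simp [Fin.val_succ]; omega⟩

lemma three_le {m : ℕ} (j : Fin (m+3)) (h : 3 ≤ j.val) : ∃ i : Fin m, j = i.succ.succ.succ :=
  ⟨⟨j.val - 3, by omega⟩, by ext; simp [Fin.val_succ]; omega⟩

lemma e2_small {m : ℕ} (σ : Equiv.Perm (Fin m)) {j : Fin (m+2)} (hj : 2 ≤ j.val) :
    ((e2 σ) j).val < m := by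
  obtain ⟨i, rfl⟩ := two_le j hj
  rw [e2_val_succ]; exact (σ i).isLt

lemma e3_small {m : ℕ} (σ : Equiv.Perm (Fin m)) {j : Fin (m+3)} (hj : 3 ≤ j.val) :
    ((e3 σ) j).val < m := by
  obtain ⟨i, rfl⟩ := three_le j hj
  rw [e3_val_succ]; exact (σ i).isLt

lemma contains_up2 {m k : ℕ} {σ : Equiv.Perm (Fin m)} {τ : Fin k → ℕ}
    (h : Contains σ τ) : Contains (e2 σ) τ := by
  obtain ⟨f, hf, hv⟩ := h
  refine ⟨fun a => (f a).succ.succ, fun a b hab => by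
    simp only [Fin.succ_lt_succ_iff]; exact hf hab, fun a b => ?_⟩
  rw [Fin.lt_def, e2_val_succ, e2_val_succ, ← Fin.lt_def]
  exact hv a b

lemma contains_up3 {m k : ℕ} {σ : Equiv.Perm (Fin m)} {τ : Fin k → ℕ}
    (h : Contains σ τ) : Contains (e3 σ) τ := by
  obtain ⟨f, hf, hv⟩ := h
  refine ⟨fun a => (f a).succ.succ.succ, fun a b hab => by
    simp only [Fin.succ_lt_succ_iff]; exact hf hab, fun a b => ?_⟩
  rw [Fin.lt_def, e3_val_succ, e3_val_succ, ← Fin.lt_def]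
  exact hv a b

lemma shift2 {m k : ℕ} {σ : Equiv.Perm (Fin m)} {τ : Fin (k+1) → ℕ}
    (f : Fin (k+1) → Fin (m+2)) (hf : StrictMono f) (h2 : 2 ≤ (f 0).val)
    (hv : ∀ a b, (e2 σ) (f a) < (e2 σ) (f b) ↔ τ a < τ b) : Contains σ τ := by
  have hall : ∀ a, 2 ≤ (f a).val := by
    intro a
    have : f 0 ≤ f a := hf.monotone (Fin.zero_le a)
    rw [Fin.le_def] at this
    omega
  have hlt : ∀ a, (f a).val < m + 2 := fun a => (f a).isLt
  refine ⟨fun a => ⟨(f a).val - 2, by have := hall a; have := hlt a; omega⟩, ?_, ?_⟩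
  · intro a b hab
    have := hf hab
    rw [Fin.lt_def] at this ⊢
    simp only
    have := hall a
    omega
  · intro a b
    rw [← hv a b]
    have key : ∀ a, f a = (⟨(f a).val - 2, by have := hall a; have := hlt a; omega⟩ : Fin m).succ.succ := by
      intro a; ext; simp [Fin.val_succ]; have := hall a; omega
    rw [Fin.lt_def, Fin.lt_def]
    conv_rhs => rw [key a, key b, e2_val_succ, e2_val_succ]

lemma shift3 {m k : ℕ} {σ : Equiv.Perm (Fin m)} {τ : Fin (k+1) → ℕ}
    (f : Fin (k+1) → Fin (m+3)) (hf : StrictMono f) (h3 : 3 ≤ (f 0).val)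
    (hv : ∀ a b, (e3 σ) (f a) < (e3 σ) (f b) ↔ τ a < τ b) : Contains σ τ := by
  have hall : ∀ a, 3 ≤ (f a).val := by
    intro a
    have : f 0 ≤ f a := hf.monotone (Fin.zero_le a)
    rw [Fin.le_def] at this
    omega
  have hlt : ∀ a, (f a).val < m + 3 := fun a => (f a).isLt
  refine ⟨fun a => ⟨(f a).val - 3, by have := hall a; have := hlt a; omega⟩, ?_, ?_⟩
  · intro a b hab
    have := hf hab
    rw [Fin.lt_def] at this ⊢
    simp only
    have := hall a
    omega
  · intro a b
    rw [← hv a b]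
    have key : ∀ a, f a = (⟨(f a).val - 3, by have := hall a; have := hlt a; omega⟩ : Fin m).succ.succ.succ := by
      intro a; ext; simp [Fin.val_succ]; have := hall a; omega
    rw [Fin.lt_def, Fin.lt_def]
    conv_rhs => rw [key a, key b, e3_val_succ, e3_val_succ]

end Stmt7Aux

namespace Stmt7Aux
open Equiv Fin

lemma contains_down2 {m k : ℕ} {σ : Equiv.Perm (Fin m)} {τ : Fin (k+2) → ℕ}
    (H1 : ∃ b, b ≠ 1 ∧ τ 0 < τ b) (h : Contains (e2 σ) τ) : Contains σ τ := by
  obtain ⟨f, hf, hv⟩ := h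
  obtain ⟨b, hb1, hb0⟩ := H1
  have hbne0 : b ≠ 0 := by rintro rfl; exact lt_irrefl _ hb0
  have hfb := (hv 0 b).mpr hb0
  rw [Fin.lt_def] at hfb
  rcases Nat.lt_or_ge (f 0).val 2 with hx | hx
  · -- x = 0 or 1
    rcases Nat.lt_or_ge (f 0).val 1 with hx0 | hx1
    · -- x = 0
      have hf0 : f 0 = 0 := by ext; rw [Fin.val_zero]; omega
      rw [hf0, e2_val_zero] at hfb
      -- f b must have value with val > m, so (f b).val = 1
      have hfbpos : 0 < (f b).val := by
        have : f 0 < f b := hf (Fin.pos_iff_ne_zero.mpr hbne0)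
        rw [Fin.lt_def] at this; omega
      have hfb1 : (f b).val = 1 := by
        by_contra hne
        have h2 : 2 ≤ (f b).val := by omega
        have := e2_small σ h2
        omega
      -- b ≠ 0, b ≠ 1, so 1 < b
      have hb2 : (1 : Fin (k+2)) < b := by
        rw [Fin.lt_def, Fin.val_one]
        have h0 : b.val ≠ 0 := fun h => hbne0 (Fin.ext h)
        have h1 : b.val ≠ 1 := fun h => hb1 (Fin.ext (by rw [h, Fin.val_one]))
        omega
      have hlow : f 0 < f 1 := hf (by rw [Fin.lt_def, Fin.val_one, Fin.val_zero]; omega)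
      have hhigh : f 1 < f b := hf hb2
      rw [Fin.lt_def] at hlow hhigh
      omega
    · -- x = 1
      have hf0 : f 0 = 1 := by ext; rw [Fin.val_one]; omega
      rw [hf0, e2_val_one] at hfb
      have := ((e2 σ) (f b)).isLt
      omega
  · exact shift2 f hf hx hv

end Stmt7Aux

namespace Stmt7Aux
open Equiv Fin

lemma fin_eq_one {m : ℕ} {j : Fin (m+2)} (h : j.val = 1) : j = 1 := by
  ext; rw [Fin.val_one]; omega

lemma fin_eq_two {m : ℕ} {j : Fin (m+3)} (h : j.val = 2) : j = 2 := by
  ext; rw [Fin.val_two]; omega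

lemma contains_down3_aux {m k : ℕ} {σ : Equiv.Perm (Fin m)} {τ : Fin (k+2) → ℕ}
    (hb : ∃ b, τ 0 < τ b) (h : Contains (e3 σ) τ)
    (H0 : ∀ f : Fin (k+2) → Fin (m+3), StrictMono f →
      (∀ a b, (e3 σ) (f a) < (e3 σ) (f b) ↔ τ a < τ b) → f 0 = 0 → Contains σ τ) :
    Contains σ τ := by
  obtain ⟨f, hf, hv⟩ := h
  obtain ⟨b, hb0⟩ := hb
  have hbne0 : b ≠ 0 := by rintro rfl; exact lt_irrefl _ hb0
  have hfb := (hv 0 b).mpr hb0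
  rw [Fin.lt_def] at hfb
  have hfblt : f 0 < f b := hf (Fin.pos_iff_ne_zero.mpr hbne0)
  rw [Fin.lt_def] at hfblt
  rcases Nat.lt_or_ge (f 0).val 3 with hx | hx
  · interval_cases hx' : (f 0).val
    · exact H0 f hf hv (by ext; rw [Fin.val_zero]; omega)
    · -- x = 1 : value m+2, the max
      have hf0 : f 0 = 1 := fin_eq_one hx'
      rw [hf0, e3_val_one] at hfb
      have := ((e3 σ) (f b)).isLt
      omega
    · -- x = 2 : value m+1
      have hf0 : f 0 = 2 := fin_eq_two hx'
      rw [hf0, e3_val_two] at hfb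
      have hsm := e3_small σ (j := f b) (by omega)
      omega
  · exact shift3 f hf hx hv

lemma hval_mid3 {m k : ℕ} {σ : Equiv.Perm (Fin m)} {f : Fin (k+2) → Fin (m+3)}
    {a : Fin (k+2)} (hgt : m < ((e3 σ) (f a)).val) (hpos : 0 < (f a).val) :
    (f a).val = 1 ∨ (f a).val = 2 := by
  rcases Nat.lt_or_ge (f a).val 3 with h | h
  · omega
  · have := e3_small σ (j := f a) h
    omega

lemma contains_down3_123 {m : ℕ} {σ : Equiv.Perm (Fin m)}
    (h : Contains (e3 σ) p123) : Contains σ p123 := by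
  refine contains_down3_aux ⟨1, by decide⟩ h ?_
  intro f hf hv hf0
  have h01 := (hv 0 1).mpr (by decide)
  have h12 := (hv 1 2).mpr (by decide)
  have h02 := (hv 0 2).mpr (by decide)
  rw [Fin.lt_def] at h01 h12 h02
  rw [hf0, e3_val_zero] at h01 h02
  have hm1 : 0 < (f 1).val := by
    have := hf (show (0:Fin 3) < 1 by decide); rw [Fin.lt_def, hf0] at this
    simpa using this
  have hm2 : (f 1).val < (f 2).val := by
    have := hf (show (1:Fin 3) < 2 by decide); rwa [Fin.lt_def] at this
  rcases hval_mid3 (σ := σ) (by omega) hm1 with h1 | h1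
  · -- f 1 = 1, value m+2
    rw [fin_eq_one h1, e3_val_one] at h12
    have := ((e3 σ) (f 2)).isLt
    omega
  · -- f 1 = 2, value m+1
    rw [fin_eq_two h1, e3_val_two] at h12
    have hsm := e3_small σ (j := f 2) (by omega)
    omega

lemma contains_down3_213 {m : ℕ} {σ : Equiv.Perm (Fin m)}
    (h : Contains (e3 σ) p213) : Contains σ p213 := by
  refine contains_down3_aux ⟨2, by decide⟩ h ?_
  intro f hf hv hf0
  have h10 := (hv 1 0).mpr (by decide)
  have h02 := (hv 0 2).mpr (by decide)
  rw [Fin.lt_def] at h10 h02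
  rw [hf0, e3_val_zero] at h10 h02
  have hm1 : 0 < (f 1).val := by
    have := hf (show (0:Fin 3) < 1 by decide); rw [Fin.lt_def, hf0] at this
    simpa using this
  have hm2 : (f 1).val < (f 2).val := by
    have := hf (show (1:Fin 3) < 2 by decide); rwa [Fin.lt_def] at this
  rcases Nat.lt_or_ge (f 1).val 3 with h1 | h1
  · have : (f 1).val = 1 ∨ (f 1).val = 2 := by omega
    rcases this with h1' | h1'
    · rw [fin_eq_one h1', e3_val_one] at h10; omega
    · rw [fin_eq_two h1', e3_val_two] at h10; omega
  · have hsm : ((e3 σ) (f 2)).val < m := e3_small σ (by omega)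
    omega

lemma contains_down3_1432 {m : ℕ} {σ : Equiv.Perm (Fin m)}
    (h : Contains (e3 σ) p1432) : Contains σ p1432 := by
  refine contains_down3_aux ⟨1, by decide⟩ h ?_
  intro f hf hv hf0
  have h01 := (hv 0 1).mpr (by decide)
  have h02 := (hv 0 2).mpr (by decide)
  have h03 := (hv 0 3).mpr (by decide)
  rw [Fin.lt_def] at h01 h02 h03
  rw [hf0, e3_val_zero] at h01 h02 h03
  have hm1 : 0 < (f 1).val := by
    have := hf (show (0:Fin 4) < 1 by decide); rw [Fin.lt_def, hf0] at this
    simpa using this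
  have hm2 : (f 1).val < (f 2).val := by
    have := hf (show (1:Fin 4) < 2 by decide); rwa [Fin.lt_def] at this
  have hm3 : (f 2).val < (f 3).val := by
    have := hf (show (2:Fin 4) < 3 by decide); rwa [Fin.lt_def] at this
  rcases hval_mid3 (σ := σ) (by omega) hm1 with h1 | h1 <;>
  rcases hval_mid3 (σ := σ) (f := f) (a := 2) (by omega) (by omega) with h2 | h2 <;>
  rcases hval_mid3 (σ := σ) (f := f) (a := 3) (by omega) (by omega) with h3 | h3 <;>
  omega

end Stmt7Aux

namespace Stmt7Aux
open Equiv Fin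

def AA {N : ℕ} (σ : Equiv.Perm (Fin N)) : Prop :=
  Avoids σ p123 ∧ Avoids σ p213 ∧ Avoids σ p1432

lemma AA_e1 {m : ℕ} (σ : Equiv.Perm (Fin m)) : AA (e1 σ) ↔ AA σ := by
  unfold AA Avoids
  rw [contains_e1_iff (k := 2) ⟨1, by decide⟩, contains_e1_iff (k := 2) ⟨2, by decide⟩,
    contains_e1_iff (k := 3) ⟨1, by decide⟩]

lemma AA_e2 {m : ℕ} (σ : Equiv.Perm (Fin m)) : AA (e2 σ) ↔ AA σ := by
  constructor
  · exact fun h => ⟨fun c => h.1 (contains_up2 c), fun c => h.2.1 (contains_up2 c),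
      fun c => h.2.2 (contains_up2 c)⟩
  · exact fun h => ⟨fun c => h.1 (contains_down2 ⟨2, by decide, by decide⟩ c),
      fun c => h.2.1 (contains_down2 ⟨2, by decide, by decide⟩ c),
      fun c => h.2.2 (contains_down2 ⟨2, by decide, by decide⟩ c)⟩

lemma AA_e3 {m : ℕ} (σ : Equiv.Perm (Fin m)) : AA (e3 σ) ↔ AA σ := by
  constructor
  · exact fun h => ⟨fun c => h.1 (contains_up3 c), fun c => h.2.1 (contains_up3 c),
      fun c => h.2.2 (contains_up3 c)⟩
  · exact fun h => ⟨fun c => h.1 (contains_down3_123 c),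
      fun c => h.2.1 (contains_down3_213 c),
      fun c => h.2.2 (contains_down3_1432 c)⟩

end Stmt7Aux

namespace Stmt7Aux
open Equiv Fin

lemma exists_e1 {m : ℕ} (π : Equiv.Perm (Fin (m+1))) (h : π 0 = Fin.last m) :
    ∃ σ : Equiv.Perm (Fin m), π = e1 σ := by
  have hne : ∀ i : Fin m, π i.succ ≠ Fin.last m := fun i h' =>
    Fin.succ_ne_zero i (π.injective (h'.trans h.symm))
  set g : Fin m → Fin m := fun i => (π i.succ).castPred (hne i) with hg
  have ginj : Function.Injective g := by
    intro a b hab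
    have : π a.succ = π b.succ := by
      have := congrArg Fin.castSucc hab
      simpa [hg, Fin.castSucc_castPred] using this
    exact Fin.succ_injective _ (π.injective this)
  refine ⟨Equiv.ofBijective g (Finite.injective_iff_bijective.mp ginj), ?_⟩
  apply Equiv.ext (fun j => ?_)
  induction j using Fin.cases with
  | zero => rw [h, e1_zero]
  | succ i =>
      rw [e1_succ]
      show π i.succ = Fin.castSucc (g i)
      rw [hg, Fin.castSucc_castPred]

lemma contains123_of {N : ℕ} (π : Equiv.Perm (Fin N)) (i j l : Fin N)
    (hij : i < j) (hjl : j < l) (h1 : π i < π j) (h2 : π j < π l) : Contains π p123 := by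
  rw [Fin.lt_def] at hij hjl h1 h2
  have h3 : (π i).val < (π l).val := by omega
  refine ⟨![i, j, l], ?_, ?_⟩
  · intro a b hab
    rw [Fin.lt_def] at hab ⊢
    fin_cases a <;> fin_cases b <;> simp at hab ⊢ <;> omega
  · intro a b
    rw [Fin.lt_def]
    fin_cases a <;> fin_cases b <;> simp [p123] <;> omega

lemma contains213_of {N : ℕ} (π : Equiv.Perm (Fin N)) (i j l : Fin N)
    (hij : i < j) (hjl : j < l) (h1 : π j < π i) (h2 : π i < π l) : Contains π p213 := by
  rw [Fin.lt_def] at hij hjl h1 h2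
  refine ⟨![i, j, l], ?_, ?_⟩
  · intro a b hab
    rw [Fin.lt_def] at hab ⊢
    fin_cases a <;> fin_cases b <;> simp at hab ⊢ <;> omega
  · intro a b
    rw [Fin.lt_def]
    fin_cases a <;> fin_cases b <;> simp [p213] <;> omega

lemma contains1432_of {N : ℕ} (π : Equiv.Perm (Fin N)) (i j l r : Fin N)
    (hij : i < j) (hjl : j < l) (hlr : l < r)
    (h1 : π i < π r) (h2 : π r < π l) (h3 : π l < π j) : Contains π p1432 := by
  rw [Fin.lt_def] at hij hjl hlr h1 h2 h3
  refine ⟨![i, j, l, r], ?_, ?_⟩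
  · intro a b hab
    rw [Fin.lt_def] at hab ⊢
    fin_cases a <;> fin_cases b <;> simp at hab ⊢ <;> omega
  · intro a b
    rw [Fin.lt_def]
    fin_cases a <;> fin_cases b <;> simp [p1432] <;> omega

end Stmt7Aux

namespace Stmt7Aux
open Equiv Fin

lemma e1_one {m : ℕ} (σ : Equiv.Perm (Fin (m+1))) :
    e1 σ (1 : Fin (m+2)) = Fin.castSucc (σ 0) := by
  rw [fin_one_succ, e1_succ]

lemma e1_two {m : ℕ} (σ : Equiv.Perm (Fin (m+2))) :
    e1 σ (2 : Fin (m+3)) = Fin.castSucc (σ 1) := by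
  rw [fin_two_succ, e1_succ]

lemma surj {m : ℕ} (π : Equiv.Perm (Fin (m+3))) (h : AA π) :
    (∃ σ, π = e1 σ) ∨ (∃ σ, π = e2 σ) ∨ (∃ σ, π = e3 σ) := by
  obtain ⟨h123, h213, h1432⟩ := h
  set L : Fin (m+3) := Fin.last (m+2) with hL
  set p : Fin (m+3) := π.symm L with hp
  have hπp : π p = L := π.apply_symm_apply L
  have hval : ∀ j : Fin (m+3), j ≠ p → (π j).val < m + 2 := by
    intro j hj
    have h1 : π j ≠ L := fun hc => hj (by rw [hp, ← hc, Equiv.symm_apply_apply])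
    have h2 : (π j).val ≠ m + 2 := fun hc => h1 (by ext; rw [hc]; simp [hL])
    have := (π j).isLt
    omega
  -- step 1 : p.val ≤ 1
  have hple : p.val ≤ 1 := by
    by_contra hp2
    push_neg at hp2
    have h01 : (0 : Fin (m+3)) < 1 := by rw [Fin.lt_def]; simp
    have h1p : (1 : Fin (m+3)) < p := by rw [Fin.lt_def]; simp; omega
    have hne0 : (0 : Fin (m+3)) ≠ p := fun hc => by rw [← hc] at hp2; simp at hp2
    have hne1 : (1 : Fin (m+3)) ≠ p := fun hc => by rw [← hc] at hp2; simp at hp2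
    have hv0 := hval 0 hne0
    have hv1 := hval 1 hne1
    rcases lt_trichotomy (π 0) (π 1) with hlt | heq | hgt
    · exact h123 (contains123_of π 0 1 p h01 h1p hlt
        (by rw [Fin.lt_def, hπp]; simp [hL]; omega))
    · exact absurd (π.injective heq) (by simp)
    · exact h213 (contains213_of π 0 1 p h01 h1p hgt
        (by rw [Fin.lt_def, hπp]; simp [hL]; omega))
  rcases Nat.lt_or_ge p.val 1 with hp0 | hp1
  · -- p = 0 : leading max
    have : π 0 = L := by
      rw [show (0 : Fin (m+3)) = p by ext; rw [Fin.val_zero]; omega, hπp]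
    obtain ⟨σ, hσ⟩ := exists_e1 π this
    exact Or.inl ⟨σ, hσ⟩
  · -- p = 1
    have hpeq : p = 1 := by ext; rw [Fin.val_one]; omega
    have hπ1 : π 1 = L := by rw [← hpeq, hπp]
    have hne0 : (0 : Fin (m+3)) ≠ p := by rw [hpeq]; simp
    have hx2 := hval 0 hne0
    -- claim : m ≤ (π 0).val
    have hxm : m ≤ (π 0).val := by
      by_contra hxlt
      push_neg at hxlt
      set x := (π 0).val with hxdef
      set v : Fin (m+3) := ⟨x+1, by omega⟩ with hv
      set w : Fin (m+3) := ⟨x+2, by omega⟩ with hw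
      set j1 : Fin (m+3) := π.symm v with hj1
      set j2 : Fin (m+3) := π.symm w with hj2
      have hπj1 : π j1 = v := π.apply_symm_apply v
      have hπj2 : π j2 = w := π.apply_symm_apply w
      have hj1ge : 2 ≤ j1.val := by
        have hne0' : j1 ≠ 0 := fun hc => by
          rw [hc] at hπj1; rw [hπj1] at hxdef; simp [hv] at hxdef
        have hne1' : j1 ≠ 1 := fun hc => by
          rw [hc, hπ1] at hπj1
          have := congrArg Fin.val hπj1
          simp [hL, hv] at this
          omega
        have h0 : j1.val ≠ 0 := fun hc => hne0' (by ext; rw [Fin.val_zero]; omega)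
        have h1 : j1.val ≠ 1 := fun hc => hne1' (by ext; rw [Fin.val_one]; omega)
        omega
      have hj2ge : 2 ≤ j2.val := by
        have hne0' : j2 ≠ 0 := fun hc => by
          rw [hc] at hπj2; rw [hπj2] at hxdef; simp [hw] at hxdef
        have hne1' : j2 ≠ 1 := fun hc => by
          rw [hc, hπ1] at hπj2
          have := congrArg Fin.val hπj2
          simp [hL, hw] at this
          omega
        have h0 : j2.val ≠ 0 := fun hc => hne0' (by ext; rw [Fin.val_zero]; omega)
        have h1 : j2.val ≠ 1 := fun hc => hne1' (by ext; rw [Fin.val_one]; omega)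
        omega
      have hjne : j1 ≠ j2 := fun hc => by
        rw [hc] at hπj1
        rw [hπj1] at hπj2
        have : v = w := hπj2.symm ▸ rfl
        have := congrArg Fin.val this
        simp [hv, hw] at this
      rcases lt_or_gt_of_ne hjne with hlt | hgt
      · refine h123 (contains123_of π 0 j1 j2 ?_ hlt ?_ ?_)
        · rw [Fin.lt_def]; rw [Fin.val_zero]; omega
        · rw [Fin.lt_def, hπj1]; simp [hv]; omega
        · rw [Fin.lt_def, hπj1, hπj2]; simp [hv, hw]
      · refine h1432 (contains1432_of π 0 1 j2 j1 ?_ ?_ hgt ?_ ?_ ?_)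
        · rw [Fin.lt_def]; simp
        · rw [Fin.lt_def]; simp [Fin.val_one]; omega
        · rw [Fin.lt_def, hπj1]; simp [hv]; omega
        · rw [Fin.lt_def, hπj1, hπj2]; simp [hv, hw]
        · rw [Fin.lt_def, hπj2, hπ1]; simp [hw, hL]; omega
    rcases Nat.lt_or_ge (π 0).val (m+1) with hxm' | hxm'
    · -- x = m : the e3 case
      have hx : (π 0).val = m := by omega
      set v1 : Fin (m+3) := ⟨m+1, by omega⟩ with hv1
      set q : Fin (m+3) := π.symm v1 with hq
      have hπq : π q = v1 := π.apply_symm_apply v1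
      have hqge : 2 ≤ q.val := by
        have hne0' : q ≠ 0 := fun hc => by
          rw [hc] at hπq
          have := congrArg Fin.val hπq
          simp [hv1] at this
          omega
        have hne1' : q ≠ 1 := fun hc => by
          rw [hc, hπ1] at hπq
          have := congrArg Fin.val hπq
          simp [hL, hv1] at this
        have h0 : q.val ≠ 0 := fun hc => hne0' (by ext; rw [Fin.val_zero]; omega)
        have h1 : q.val ≠ 1 := fun hc => hne1' (by ext; rw [Fin.val_one]; omega)
        omega
      have hq2 : q.val = 2 := by
        by_contra hq3
        have hq3' : 3 ≤ q.val := by omega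
        have h2q : (2 : Fin (m+3)) ≠ q := fun hc => by
          rw [← hc] at hq3'; rw [Fin.val_two] at hq3'; omega
        have h2p : (2 : Fin (m+3)) ≠ p := by
          rw [hpeq]; intro hc
          have := congrArg Fin.val hc
          rw [Fin.val_two, Fin.val_one] at this; omega
        have hy2 := hval 2 h2p
        have hyne1 : π 2 ≠ v1 := fun hc => h2q (by rw [hq, ← hc, Equiv.symm_apply_apply])
        have hyne0 : π 2 ≠ π 0 := fun hc => by
          have := π.injective hc
          have := congrArg Fin.val this
          rw [Fin.val_two, Fin.val_zero] at this; omega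
        have hylt : (π 2).val < m := by
          have ha : (π 2).val ≠ m + 1 := fun hc => hyne1 (by ext; simp [hv1, hc])
          have hb : (π 2).val ≠ m := fun hc => hyne0 (by ext; rw [hc, hx])
          omega
        refine h213 (contains213_of π 0 2 q ?_ ?_ ?_ ?_)
        · rw [Fin.lt_def, Fin.val_zero, Fin.val_two]; omega
        · rw [Fin.lt_def, Fin.val_two]; omega
        · rw [Fin.lt_def]; omega
        · rw [Fin.lt_def, hπq]; simp [hv1]; omega
      have hπ2 : π 2 = v1 := by
        rw [show (2 : Fin (m+3)) = q by ext; rw [Fin.val_two]; omega, hπq]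
      -- build e3
      set s : Equiv.Perm (Fin (m+3)) := Equiv.swap 0 1 with hs
      set t : Equiv.Perm (Fin (m+3)) := Equiv.swap 0 2 with ht
      set π'' : Equiv.Perm (Fin (m+3)) := π * (t * s) with hπ''
      have hts : ∀ j : Fin (m+3), π'' j = π (t (s j)) := fun j => rfl
      have hs0 : s 0 = 1 := Equiv.swap_apply_left _ _
      have hs1 : s 1 = 0 := Equiv.swap_apply_right _ _
      have hs2 : s 2 = 2 := Equiv.swap_apply_of_ne_of_ne
        (by simp [Fin.ext_iff, Fin.val_two]; rw [Nat.mod_eq_of_lt (by omega)]; omega) (by simp [Fin.ext_iff, Fin.val_two]; rw [Nat.mod_eq_of_lt (by omega)]; omega)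
      have ht0 : t 0 = 2 := Equiv.swap_apply_left _ _
      have ht1 : t 1 = 1 := Equiv.swap_apply_of_ne_of_ne
        (by simp [Fin.ext_iff]) (by simp [Fin.ext_iff, Fin.val_two]; rw [Nat.mod_eq_of_lt (by omega)]; omega)
      have ht2 : t 2 = 0 := Equiv.swap_apply_right _ _
      have hπ''0 : π'' 0 = L := by rw [hts, hs0, ht1, hπ1]
      obtain ⟨σ₁, hσ₁⟩ := exists_e1 π'' hπ''0
      have hσ₁0 : σ₁ 0 = Fin.last (m+1) := by
        have : π'' 1 = v1 := by rw [hts, hs1, ht0, hπ2]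
        rw [hσ₁, e1_one] at this
        have := congrArg Fin.val this
        simp [hv1] at this
        ext; simp [this]
      obtain ⟨σ₂, hσ₂⟩ := exists_e1 σ₁ hσ₁0
      have hσ₂0 : σ₂ 0 = Fin.last m := by
        have : π'' 2 = π 0 := by rw [hts, hs2, ht2]
        rw [hσ₁, e1_two, hσ₂, e1_one] at this
        have := congrArg Fin.val this
        simp [hx] at this
        ext; simp [this]
      obtain ⟨σ₃, hσ₃⟩ := exists_e1 σ₂ hσ₂0
      refine Or.inr (Or.inr ⟨σ₃, ?_⟩)
      have hss : s * s = 1 := by rw [hs]; exact Equiv.swap_mul_self _ _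
      have htt : t * t = 1 := by rw [ht]; exact Equiv.swap_mul_self _ _
      have key : (t * s) * (s * t) = 1 := by
        rw [mul_assoc t s (s*t), ← mul_assoc s s t, hss, one_mul, htt]
      have : π'' * (s * t) = π := by
        rw [hπ'', mul_assoc, key, mul_one]
      rw [← this, hσ₁, hσ₂, hσ₃]
      rfl
    · -- x = m+1 : the e2 case
      have hx : (π 0).val = m + 1 := by omega
      set s : Equiv.Perm (Fin (m+3)) := Equiv.swap 0 1 with hs
      set π' : Equiv.Perm (Fin (m+3)) := π * s with hπ'
      have hs0 : s 0 = 1 := Equiv.swap_apply_left _ _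
      have hs1 : s 1 = 0 := Equiv.swap_apply_right _ _
      have hπ'0 : π' 0 = L := by
        show π (s 0) = L
        rw [hs0, hπ1]
      obtain ⟨σ₁, hσ₁⟩ := exists_e1 π' hπ'0
      have hσ₁0 : σ₁ 0 = Fin.last (m+1) := by
        have : π' 1 = π 0 := by show π (s 1) = π 0; rw [hs1]
        rw [hσ₁, e1_one] at this
        have := congrArg Fin.val this
        simp [hx] at this
        ext; simp [this]
      obtain ⟨σ₂, hσ₂⟩ := exists_e1 σ₁ hσ₁0
      refine Or.inr (Or.inl ⟨σ₂, ?_⟩)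
      have : π' * s = π := by
        rw [hπ', mul_assoc, hs, Equiv.swap_mul_self, mul_one]
      rw [← this, hσ₁, hσ₂]
      rfl

end Stmt7Aux

namespace Stmt7Aux
open Equiv Fin

lemma e2_inj {m : ℕ} : Function.Injective (@e2 m) := fun σ σ' h =>
  e1_inj (e1_inj (mul_right_cancel h))

lemma e3_inj {m : ℕ} : Function.Injective (@e3 m) := fun σ σ' h =>
  e1_inj (e1_inj (e1_inj (mul_right_cancel h)))

instance decContains {n k : ℕ} (σ : Equiv.Perm (Fin n)) (τ : Fin k → ℕ) :
    Decidable (Contains σ τ) := by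
  unfold Contains StrictMono
  infer_instance

instance decAvoids {n k : ℕ} (σ : Equiv.Perm (Fin n)) (τ : Fin k → ℕ) :
    Decidable (Avoids σ τ) := by
  unfold Avoids
  infer_instance

instance decAA {n : ℕ} (σ : Equiv.Perm (Fin n)) : Decidable (AA σ) := by
  unfold AA
  infer_instance

def ASet (N : ℕ) : Set (Equiv.Perm (Fin N)) := {σ | AA σ}

instance decMemASet {N : ℕ} : DecidablePred (· ∈ ASet N) := fun σ => decAA σ

lemma card_rec (m : ℕ) :
    (ASet (m+3)).ncard = (ASet (m+2)).ncard + (ASet (m+1)).ncard + (ASet m).ncard := by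
  have hun : ASet (m+3) = (e1 '' ASet (m+2)) ∪ (e2 '' ASet (m+1)) ∪ (e3 '' ASet m) := by
    ext π
    constructor
    · intro hπ
      rcases surj π hπ with ⟨σ, rfl⟩ | ⟨σ, rfl⟩ | ⟨σ, rfl⟩
      · exact Or.inl (Or.inl ⟨σ, (AA_e1 σ).mp hπ, rfl⟩)
      · exact Or.inl (Or.inr ⟨σ, (AA_e2 σ).mp hπ, rfl⟩)
      · exact Or.inr ⟨σ, (AA_e3 σ).mp hπ, rfl⟩
    · rintro ((⟨σ, hσ, rfl⟩ | ⟨σ, hσ, rfl⟩) | ⟨σ, hσ, rfl⟩)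
      · exact (AA_e1 σ).mpr hσ
      · exact (AA_e2 σ).mpr hσ
      · exact (AA_e3 σ).mpr hσ
  have d12 : Disjoint (e1 '' ASet (m+2)) (e2 '' ASet (m+1)) := by
    rw [Set.disjoint_left]
    rintro x ⟨σ, _, rfl⟩ ⟨σ', _, hx⟩
    have := congrArg (fun π : Equiv.Perm (Fin (m+3)) => (π 0).val) hx
    simp only [e1_val_zero, e2_val_zero] at this
    omega
  have d13 : Disjoint (e1 '' ASet (m+2)) (e3 '' ASet m) := by
    rw [Set.disjoint_left]
    rintro x ⟨σ, _, rfl⟩ ⟨σ', _, hx⟩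
    have := congrArg (fun π : Equiv.Perm (Fin (m+3)) => (π 0).val) hx
    simp only [e1_val_zero, e3_val_zero] at this
    omega
  have d23 : Disjoint (e2 '' ASet (m+1)) (e3 '' ASet m) := by
    rw [Set.disjoint_left]
    rintro x ⟨σ, _, rfl⟩ ⟨σ', _, hx⟩
    have := congrArg (fun π : Equiv.Perm (Fin (m+3)) => (π 0).val) hx
    simp only [e2_val_zero, e3_val_zero] at this
    omega
  rw [hun, Set.ncard_union_eq (Set.disjoint_union_left.mpr ⟨d13, d23⟩)
      (Set.toFinite _) (Set.toFinite _),
    Set.ncard_union_eq d12 (Set.toFinite _) (Set.toFinite _),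
    Set.ncard_image_of_injective _ e1_inj, Set.ncard_image_of_injective _ e2_inj,
    Set.ncard_image_of_injective _ e3_inj]

end Stmt7Aux

namespace Stmt7Aux

lemma main (n : ℕ) : (ASet n).ncard = Trib n := by
  induction n using Nat.strong_induction_on with
  | _ n ih =>
    match n with
    | 0 =>
        rw [show (ASet 0).ncard = Nat.card ↥(ASet 0) from rfl, Nat.card_eq_fintype_card]
        decide
    | 1 =>
        rw [show (ASet 1).ncard = Nat.card ↥(ASet 1) from rfl, Nat.card_eq_fintype_card]
        decide
    | 2 =>
        rw [show (ASet 2).ncard = Nat.card ↥(ASet 2) from rfl, Nat.card_eq_fintype_card]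
        decide
    | (k+3) =>
        rw [card_rec, ih (k+2) (by omega), ih (k+1) (by omega), ih k (by omega)]
        rfl

end Stmt7Aux


theorem stmt7 (n : ℕ) :
    Nat.card {σ : Equiv.Perm (Fin n) //
      Avoids σ p123 ∧ Avoids σ p213 ∧ Avoids σ p1432} = Trib n := by
  have h := Stmt7Aux.main n
  rw [← h]
  rfl
end

section
/- Let k ≥ 2 and let r_k be the pattern k (k−1) ⋯ 2 1 (k+1) of length k+1 (i.e. r_k(j) = k+1−j for 1 ≤ j ≤ k and r_k(k+1) = k+1). Let b_n be the number of permutations of {1,…,n} avoiding 123, 132 and r_k. Then in the ring of formal power series over ℤ, (∑_{n≥0} b_n x^n)·(1 − 2x + x^{k+1}) = 1 − x; that is, the generating function of (b_n) is (1−x)/(1−2x+x^{k+1}). -/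
set_option maxHeartbeats 1000000
section AuxStmt8
open Finset

def Pk (k n : ℕ) (σ : Equiv.Perm (Fin n)) : Prop :=
  ∀ i : Fin n, n ≤ (i : ℕ) + (σ i : ℕ) + 2 ∧ (i : ℕ) + (σ i : ℕ) + 2 ≤ n + k

instance (k n : ℕ) : DecidablePred (Pk k n) := fun _ => Fintype.decidableForallFintype

lemma rpat_eq_of_ne {k : ℕ} (a : Fin (k + 1)) (ha : a.val ≠ k) : rpat k a = k - a.val :=
  if_neg ha

lemma rpat_eq_of_eq {k : ℕ} (a : Fin (k + 1)) (ha : a.val = k) : rpat k a = k + 1 :=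
  if_pos ha

section Aux
variable {n : ℕ} (σ : Equiv.Perm (Fin n))

lemma card_filter_perm (p : Fin n → Prop) [DecidablePred p] :
    (univ.filter (fun j => p (σ j))).card = (univ.filter p).card := by
  apply Finset.card_bij' (fun j _ => σ j) (fun v _ => σ.symm v)
  · intro a ha; simp only [mem_filter, mem_univ, true_and] at ha ⊢; exact ha
  · intro a ha; simp only [mem_filter, mem_univ, true_and] at ha ⊢; simpa using ha
  · intro a _; simp
  · intro a _; simp

lemma card_gt (i : Fin n) :
    (univ.filter fun j => σ i < σ j).card = n - 1 - (σ i : ℕ) := by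
  rw [card_filter_perm σ (fun v => σ i < v)]
  have h : univ.filter (fun v : Fin n => σ i < v) = Finset.Ioi (σ i) := by ext v; simp
  rw [h, Fin.card_Ioi]

lemma card_lt (i : Fin n) :
    (univ.filter fun j => σ j < σ i).card = (σ i : ℕ) := by
  rw [card_filter_perm σ (fun v => v < σ i)]
  have h : univ.filter (fun v : Fin n => v < σ i) = Finset.Iio (σ i) := by ext v; simp
  rw [h, Fin.card_Iio]

lemma contains_of_triple_s8 {i j l : Fin n} (hij : i < j) (hjl : j < l)
    (h1 : σ i < σ j) (h2 : σ i < σ l) : Contains σ p123 ∨ Contains σ p132 := by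
  set f : Fin 3 → Fin n := fun a => if a.val = 0 then i else if a.val = 1 then j else l with hf
  have hmono : StrictMono f := by
    intro a b hab
    have hab' : a.val < b.val := hab
    fin_cases a <;> fin_cases b <;> simp [hf] at hab' ⊢ <;>
      first
        | exact hij | exact hjl | exact hij.trans hjl | omega
  rcases lt_trichotomy (σ j) (σ l) with h | h | h
  · left
    refine ⟨f, hmono, ?_⟩
    intro a b
    have e1 : σ i < σ l := h2
    fin_cases a <;> fin_cases b <;>
      simp [hf, p123] <;>
      first
        | exact h1 | exact h | exact h1.trans h
        | exact h1.le | exact h.le | exact (h1.trans h).le | exact e1.le | exact le_refl _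
  · exact absurd (σ.injective h) hjl.ne
  · right
    refine ⟨f, hmono, ?_⟩
    intro a b
    fin_cases a <;> fin_cases b <;>
      simp [hf, p132] <;>
      first
        | exact h1 | exact h | exact h2
        | exact h1.le | exact h.le | exact h2.le | exact le_refl _

lemma triple_of_contains (h : Contains σ p123 ∨ Contains σ p132) :
    ∃ i j l : Fin n, i < j ∧ j < l ∧ σ i < σ j ∧ σ i < σ l := by
  rcases h with ⟨f, hm, hiff⟩ | ⟨f, hm, hiff⟩
  · refine ⟨f 0, f 1, f 2, hm (by decide), hm (by decide), ?_, ?_⟩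
    · exact (hiff 0 1).mpr (by norm_num [p123])
    · exact (hiff 0 2).mpr (by norm_num [p123]; decide)
  · refine ⟨f 0, f 1, f 2, hm (by decide), hm (by decide), ?_, ?_⟩
    · exact (hiff 0 1).mpr (by norm_num [p132])
    · exact (hiff 0 2).mpr (by norm_num [p132]; decide)


lemma no_triple_of_lower (hP : ∀ i : Fin n, n ≤ (i : ℕ) + (σ i : ℕ) + 2) :
    ¬ ∃ i j l : Fin n, i < j ∧ j < l ∧ σ i < σ j ∧ σ i < σ l := by
  rintro ⟨i, j, l, hij, hjl, h1, h2⟩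
  set S : Finset (Fin n) := insert j (insert l (Finset.Iio i)) with hS
  have hjl' : j ≠ l := hjl.ne
  have hjI : j ∉ Finset.Iio i := by simp [not_lt, hij.le]
  have hlI : l ∉ Finset.Iio i := by simp [not_lt, (hij.trans hjl).le]
  have hScard : S.card = (i : ℕ) + 2 := by
    rw [hS, Finset.card_insert_of_notMem (by simp [hjl', hjI]),
      Finset.card_insert_of_notMem hlI, Fin.card_Iio]
  have hinj : Set.InjOn (fun p => ((σ p : ℕ))) S := by
    intro a _ b _ hab
    exact σ.injective (Fin.ext hab)
  have hTcard : (S.image (fun p => ((σ p : ℕ)))).card = (i : ℕ) + 2 := by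
    rw [Finset.card_image_of_injOn hinj, hScard]
  have hsub : (S.image (fun p => ((σ p : ℕ)))) ⊆ Finset.Icc (n - 1 - (i : ℕ)) (n - 1) := by
    intro v hv
    simp only [Finset.mem_image] at hv
    obtain ⟨p, hp, rfl⟩ := hv
    rw [hS] at hp
    simp only [Finset.mem_insert, Finset.mem_Iio] at hp
    have hpn := (σ p).isLt
    have hin := i.isLt
    rcases hp with rfl | rfl | hp
    · have := hP i
      have hjv : (σ i : ℕ) < (σ p : ℕ) := h1
      simp only [Finset.mem_Icc]; omega
    · have := hP i
      have hjv : (σ i : ℕ) < (σ p : ℕ) := h2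
      simp only [Finset.mem_Icc]; omega
    · have := hP p
      have hpi : (p : ℕ) < (i : ℕ) := hp
      simp only [Finset.mem_Icc]; omega
  have := Finset.card_le_card hsub
  rw [hTcard, Nat.card_Icc] at this
  have hin := i.isLt
  omega

lemma lower_of_avoid (h1 : Avoids σ p123) (h2 : Avoids σ p132) :
    ∀ i : Fin n, n ≤ (i : ℕ) + (σ i : ℕ) + 2 := by
  by_contra hcon
  push_neg at hcon
  obtain ⟨i, hi⟩ := hcon
  have hunion : univ.filter (fun j => σ i < σ j) ⊆
      (univ.filter (fun j => σ i < σ j ∧ i < j)) ∪ (Finset.Iio i) := by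
    intro p hp
    simp only [Finset.mem_filter, mem_univ, true_and] at hp
    by_cases hpi : i < p
    · exact Finset.mem_union_left _ (by simp [hp, hpi])
    · refine Finset.mem_union_right _ (Finset.mem_Iio.2 ?_)
      rcases lt_or_eq_of_le (not_lt.1 hpi) with h | h
      · exact h
      · exact absurd (congrArg σ h) hp.ne'
  have hle := (Finset.card_le_card hunion).trans (Finset.card_union_le _ _)
  rw [card_gt, Fin.card_Iio] at hle
  have hbig : 1 < (univ.filter fun j => σ i < σ j ∧ i < j).card := by
    have hvn := (σ i).isLt
    omega
  obtain ⟨a, ha, b, hb, hab⟩ := Finset.one_lt_card.1 hbig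
  simp only [Finset.mem_filter, mem_univ, true_and] at ha hb
  have hcontains : Contains σ p123 ∨ Contains σ p132 := by
    rcases lt_or_gt_of_ne hab with h | h
    · exact contains_of_triple_s8 σ ha.2 h ha.1 hb.1
    · exact contains_of_triple_s8 σ hb.2 h hb.1 ha.1
  rcases hcontains with hc | hc
  · exact h1 hc
  · exact h2 hc


lemma avoid12_of_lower (hP : ∀ i : Fin n, n ≤ (i : ℕ) + (σ i : ℕ) + 2) :
    Avoids σ p123 ∧ Avoids σ p132 := by
  constructor
  · intro hc
    exact no_triple_of_lower σ hP (triple_of_contains σ (Or.inl hc))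
  · intro hc
    exact no_triple_of_lower σ hP (triple_of_contains σ (Or.inr hc))

lemma dec_before (hP : ∀ i : Fin n, n ≤ (i : ℕ) + (σ i : ℕ) + 2)
    {p q i : Fin n} (hpq : p < q) (hqi : q < i) (hp : σ p < σ i) (hq : σ q < σ i) :
    σ q < σ p := by
  rcases lt_trichotomy (σ p) (σ q) with h | h | h
  · exact absurd ⟨p, q, i, hpq, hqi, h, hp⟩ (no_triple_of_lower σ hP)
  · exact absurd (σ.injective h) hpq.ne
  · exact h

lemma avoidr_of_P {k : ℕ} (hk : 1 ≤ k) (hP : Pk k n σ) : Avoids σ (rpat k) := by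
  rintro ⟨f, hf, hiff⟩
  set F : ℕ → ℕ := fun t => if h : t < k + 1 then (σ (f ⟨t, h⟩) : ℕ) else 0 with hF
  set G : ℕ → ℕ := fun t => if h : t < k + 1 then (f ⟨t, h⟩ : ℕ) else 0 with hG
  have hFlt : ∀ t, t < k → F t < F k := by
    intro t h
    have hx := (hiff ⟨t, by omega⟩ ⟨k, by omega⟩).mpr (by
      show (if t = k then k + 1 else k - t) < (if k = k then k + 1 else k - k)
      rw [if_neg (by omega), if_pos rfl]
      omega)
    rw [hF]
    simp only [dif_pos (show t < k + 1 by omega), dif_pos (show k < k + 1 by omega)]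
    exact hx
  have hFdec : ∀ t, t + 1 < k → F (t + 1) < F t := by
    intro t h
    have hx := (hiff ⟨t + 1, by omega⟩ ⟨t, by omega⟩).mpr (by
      show (if t + 1 = k then k + 1 else k - (t + 1)) < (if t = k then k + 1 else k - t)
      rw [if_neg (by omega), if_neg (by omega)]
      omega)
    rw [hF]
    simp only [dif_pos (show t + 1 < k + 1 by omega), dif_pos (show t < k + 1 by omega)]
    exact hx
  have chain : ∀ t, t < k → F t + t ≤ F 0 := by
    intro t
    induction t with
    | zero => intro _; omega
    | succ m ih =>
      intro hm
      have h2 := hFdec m hm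
      have h1 := ih (by omega)
      omega
  have hPt : ∀ t (h : t < k + 1), n ≤ G t + F t + 2 ∧ G t + F t + 2 ≤ n + k := by
    intro t h
    rw [hF, hG]
    simp only [dif_pos h]
    exact hP (f ⟨t, h⟩)
  have hGlt : G (k - 1) < G k := by
    have hfk : f ⟨k - 1, by omega⟩ < f ⟨k, by omega⟩ := by
      apply hf
      rw [Fin.lt_def]
      simp only []
      omega
    rw [hG]
    simp only [dif_pos (show k - 1 < k + 1 by omega), dif_pos (show k < k + 1 by omega)]
    exact hfk
  have hch := chain (k - 1) (by omega)
  have hF0 := hFlt 0 (by omega)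
  have hP1 := hPt (k - 1) (by omega)
  have hP2 := hPt k (by omega)
  omega

lemma upper_of_avoid {k : ℕ} (hk : 1 ≤ k) (h1 : Avoids σ p123) (h2 : Avoids σ p132)
    (h3 : Avoids σ (rpat k)) : ∀ i : Fin n, (i : ℕ) + (σ i : ℕ) + 2 ≤ n + k := by
  have hlow := lower_of_avoid σ h1 h2
  by_contra hcon
  push_neg at hcon
  obtain ⟨i, hi⟩ := hcon
  have hunion : univ.filter (fun j => σ j < σ i) ⊆
      (univ.filter (fun j => σ j < σ i ∧ j < i)) ∪ (Finset.Ioi i) := by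
    intro p hp
    simp only [Finset.mem_filter, mem_univ, true_and] at hp
    by_cases hpi : p < i
    · exact Finset.mem_union_left _ (by simp [hp, hpi])
    · refine Finset.mem_union_right _ (Finset.mem_Ioi.2 ?_)
      rcases lt_or_eq_of_le (not_lt.1 hpi) with h | h
      · exact h
      · exact absurd (congrArg σ h.symm) hp.ne
  have hle := (Finset.card_le_card hunion).trans (Finset.card_union_le _ _)
  rw [card_lt, Fin.card_Ioi] at hle
  have hin := i.isLt
  have hTk : k ≤ (univ.filter (fun j => σ j < σ i ∧ j < i)).card := by omega
  obtain ⟨T, hTsub, hTcard⟩ := Finset.exists_subset_card_eq hTk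
  have hmemT : ∀ p ∈ T, σ p < σ i ∧ p < i := by
    intro p hp
    have := hTsub hp
    simpa using this
  set e := T.orderIsoOfFin hTcard with he
  set g : Fin (k + 1) → Fin n := fun a =>
    if h : a.val < k then (e ⟨a.val, h⟩ : Fin n) else i with hg
  have hgeq : ∀ (a : Fin (k + 1)) (h : a.val < k), g a = (e ⟨a.val, h⟩ : Fin n) := by
    intro a h; rw [hg]; simp only [dif_pos h]
  have hgk : ∀ a : Fin (k + 1), ¬ (a.val < k) → g a = i := by
    intro a h; rw [hg]; simp only [dif_neg h]
  have hglt : ∀ (a : Fin (k + 1)) (h : a.val < k), g a < i ∧ σ (g a) < σ i := by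
    intro a h
    have hm := hmemT _ (e ⟨a.val, h⟩).2
    rw [hgeq a h]
    exact ⟨hm.2, hm.1⟩
  have hgmono : StrictMono g := by
    intro a b hab
    by_cases hbk : b.val < k
    · have hak : a.val < k := lt_trans hab hbk
      rw [hgeq a hak, hgeq b hbk]
      have hlt : (⟨a.val, hak⟩ : Fin k) < ⟨b.val, hbk⟩ := hab
      exact Subtype.coe_lt_coe.2 (e.strictMono hlt)
    · have hak : a.val < k := by
        have h1 := a.isLt; have h2 := b.isLt
        have hab' : a.val < b.val := hab
        omega
      rw [hgk b hbk]
      exact (hglt a hak).1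
  have hdecg : ∀ (a b : Fin (k + 1)), a.val < k → b.val < k →
      a < b → σ (g b) < σ (g a) := by
    intro a b ha hb hab
    exact dec_before σ hlow (hgmono hab) (hglt b hb).1 (hglt a ha).2 (hglt b hb).2
  apply h3
  refine ⟨g, hgmono, ?_⟩
  intro a b
  by_cases ha : a.val < k <;> by_cases hb : b.val < k
  · rw [rpat_eq_of_ne a (Nat.ne_of_lt ha), rpat_eq_of_ne b (Nat.ne_of_lt hb)]
    constructor
    · intro hab
      rcases lt_trichotomy a b with h | h | h
      · exact absurd hab (not_lt.2 (hdecg a b ha hb h).le)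
      · subst h; exact absurd hab (lt_irrefl _)
      · have hab' : b.val < a.val := h
        omega
    · intro hab
      have hba : b < a := by
        rw [Fin.lt_def]; omega
      exact hdecg b a hb ha hba
  · have hb' : b.val = k := by have := b.isLt; omega
    rw [rpat_eq_of_ne a (Nat.ne_of_lt ha), rpat_eq_of_eq b hb', hgk b (by omega)]
    constructor
    · intro _; omega
    · intro _
      exact (hglt a ha).2
  · have ha' : a.val = k := by have := a.isLt; omega
    rw [rpat_eq_of_eq a ha', rpat_eq_of_ne b (Nat.ne_of_lt hb), hgk a (by omega)]
    constructor
    · intro hc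
      exact absurd hc (not_lt.2 (hglt b hb).2.le)
    · intro hc; omega
  · have hab : a = b := Fin.ext (by have := a.isLt; have := b.isLt; omega)
    subst hab
    simp

lemma char_P {k : ℕ} (hk : 1 ≤ k) :
    (Avoids σ p123 ∧ Avoids σ p132 ∧ Avoids σ (rpat k)) ↔ Pk k n σ := by
  constructor
  · rintro ⟨h1, h2, h3⟩ i
    exact ⟨lower_of_avoid σ h1 h2 i, upper_of_avoid σ hk h1 h2 h3 i⟩
  · intro hP
    have hlow : ∀ i : Fin n, n ≤ (i : ℕ) + (σ i : ℕ) + 2 := fun i => (hP i).1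
    obtain ⟨h1, h2⟩ := avoid12_of_lower σ hlow
    exact ⟨h1, h2, avoidr_of_P σ hk hP⟩

end Aux


def cnt (k n : ℕ) : ℕ := (Finset.univ.filter (Pk k n)).card

section Count

variable {k n : ℕ}

lemma forced (σ : Equiv.Perm (Fin n)) (hσ : Pk k n σ) {c : ℕ} (hc1 : 1 ≤ c) (hcn : c ≤ n)
    (hlast : ∀ i : Fin n, i.val = c - 1 → (σ i : ℕ) = n - 1) :
    ∀ m, m < c - 1 → ∀ i : Fin n, i.val = m → (σ i : ℕ) = n - 2 - m := by
  intro m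
  induction m using Nat.strong_induction_on with
  | _ m IH =>
    intro hm i him
    have h1 := (hσ i).1
    have hvn := (σ i).isLt
    by_contra hne
    rcases Nat.lt_or_ge ((σ i : Fin n) : ℕ) (n - 1) with hlt | hge2
    · have hjm : n - 2 - ((σ i : Fin n) : ℕ) < m := by omega
      have hjn : n - 2 - ((σ i : Fin n) : ℕ) < n := by omega
      have hIH := IH _ hjm (by omega) ⟨_, hjn⟩ rfl
      have heq : σ (⟨n - 2 - ((σ i : Fin n) : ℕ), hjn⟩ : Fin n) = σ i := by
        apply Fin.ext
        rw [hIH]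
        omega
      have hval := congrArg Fin.val (σ.injective heq)
      simp only [Fin.val_mk] at hval
      omega
    · have hc1' : c - 1 < n := by omega
      have hlx := hlast ⟨c - 1, hc1'⟩ rfl
      have heq : σ i = σ ⟨c - 1, hc1'⟩ := by
        apply Fin.ext
        rw [hlx]
        omega
      have hval := congrArg Fin.val (σ.injective heq)
      simp only [Fin.val_mk] at hval
      omega

lemma small_of_ge (σ : Equiv.Perm (Fin n)) (hσ : Pk k n σ) {c : ℕ} (hc1 : 1 ≤ c) (hcn : c ≤ n)
    (hlast : ∀ i : Fin n, i.val = c - 1 → (σ i : ℕ) = n - 1) :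
    ∀ x : Fin n, c ≤ x.val → (σ x : ℕ) < n - c := by
  intro x hx
  by_contra hge
  push_neg at hge
  have hvn := (σ x).isLt
  rcases Nat.lt_or_ge ((σ x : Fin n) : ℕ) (n - 1) with hlt | hge2
  · have hjn : n - 2 - ((σ x : Fin n) : ℕ) < n := by omega
    have hj := forced σ hσ hc1 hcn hlast (n - 2 - ((σ x : Fin n) : ℕ)) (by omega)
      ⟨n - 2 - ((σ x : Fin n) : ℕ), hjn⟩ rfl
    have heq : σ (⟨n - 2 - ((σ x : Fin n) : ℕ), hjn⟩ : Fin n) = σ x := by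
      apply Fin.ext
      rw [hj]
      omega
    have hval := congrArg Fin.val (σ.injective heq)
    simp only [Fin.val_mk] at hval
    omega
  · have hc1' : c - 1 < n := by omega
    have hlx := hlast ⟨c - 1, hc1'⟩ rfl
    have heq : σ x = σ ⟨c - 1, hc1'⟩ := by
      apply Fin.ext
      rw [hlx]
      omega
    have hval := congrArg Fin.val (σ.injective heq)
    simp only [Fin.val_mk] at hval
    omega

def insF (n j : ℕ) (hj : j + 1 ≤ n) (τ : Equiv.Perm (Fin (n - 1 - j))) : Fin n → Fin n :=
  fun x =>
    if _h : x.val < j then ⟨n - 2 - x.val, by omega⟩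
    else if _h2 : x.val = j then ⟨n - 1, by omega⟩
    else Fin.castLE (by omega) (τ ⟨x.val - (j + 1), by omega⟩)

def insG (n j : ℕ) (hj : j + 1 ≤ n) (τ : Equiv.Perm (Fin (n - 1 - j))) : Fin n → Fin n :=
  fun v =>
    if h : v.val < n - 1 - j then
      ⟨((τ.symm ⟨v.val, h⟩ : Fin (n - 1 - j)) : ℕ) + (j + 1),
        by have := (τ.symm ⟨v.val, h⟩).isLt; omega⟩
    else if _h2 : v.val = n - 1 then ⟨j, by omega⟩
    else ⟨n - 2 - v.val, by omega⟩

section InsLemmas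
variable {j : ℕ} (hj : j + 1 ≤ n) (τ : Equiv.Perm (Fin (n - 1 - j)))

lemma insF_val_lt (x : Fin n) (h : x.val < j) :
    (insF n j hj τ x).val = n - 2 - x.val := by
  unfold insF; rw [dif_pos h]

lemma insF_val_eq (x : Fin n) (h2 : x.val = j) :
    (insF n j hj τ x).val = n - 1 := by
  unfold insF; rw [dif_neg (by omega), dif_pos h2]

lemma insF_val_ge (x : Fin n) (h : ¬ x.val < j) (h2 : ¬ x.val = j) :
    (insF n j hj τ x).val = (τ ⟨x.val - (j + 1), by omega⟩).val := by
  unfold insF; rw [dif_neg h, dif_neg h2]; rfl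

lemma insG_val_small (v : Fin n) (h : v.val < n - 1 - j) :
    (insG n j hj τ v).val = ((τ.symm ⟨v.val, h⟩ : Fin (n - 1 - j)) : ℕ) + (j + 1) := by
  unfold insG; rw [dif_pos h]

lemma insG_val_last (v : Fin n) (h : ¬ v.val < n - 1 - j) (h2 : v.val = n - 1) :
    (insG n j hj τ v).val = j := by
  unfold insG; rw [dif_neg h, dif_pos h2]

lemma insG_val_mid (v : Fin n) (h : ¬ v.val < n - 1 - j) (h2 : ¬ v.val = n - 1) :
    (insG n j hj τ v).val = n - 2 - v.val := by
  unfold insG; rw [dif_neg h, dif_neg h2]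

lemma ins_left_inv : Function.LeftInverse (insG n j hj τ) (insF n j hj τ) := by
  intro x
  apply Fin.ext
  by_cases h1 : x.val < j
  · have e1 := insF_val_lt hj τ x h1
    have e2 := insG_val_mid hj τ (insF n j hj τ x) (by omega) (by omega)
    rw [e2, e1]
    omega
  · by_cases h2 : x.val = j
    · have e1 := insF_val_eq hj τ x h2
      have e2 := insG_val_last hj τ (insF n j hj τ x) (by omega) (by rw [e1])
      rw [e2, h2]
    · have e1 := insF_val_ge hj τ x h1 h2
      have hlt : (insF n j hj τ x).val < n - 1 - j := by
        rw [e1]; exact (τ _).isLt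
      have e2 := insG_val_small hj τ (insF n j hj τ x) hlt
      have e3 : (⟨(insF n j hj τ x).val, hlt⟩ : Fin (n - 1 - j)) =
          τ ⟨x.val - (j + 1), by omega⟩ := Fin.ext e1
      rw [e2, e3, Equiv.symm_apply_apply]
      simp only [Fin.val_mk]
      omega

lemma ins_right_inv : Function.RightInverse (insG n j hj τ) (insF n j hj τ) := by
  intro v
  apply Fin.ext
  by_cases h1 : v.val < n - 1 - j
  · have e1 := insG_val_small hj τ v h1
    have hy := (τ.symm ⟨v.val, h1⟩).isLt
    have e2 := insF_val_ge hj τ (insG n j hj τ v) (by omega) (by omega)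
    have e3 : (⟨(insG n j hj τ v).val - (j + 1), by omega⟩ : Fin (n - 1 - j)) =
        τ.symm ⟨v.val, h1⟩ := Fin.ext (by simp only [Fin.val_mk]; omega)
    rw [e2, e3, Equiv.apply_symm_apply]
  · by_cases h2 : v.val = n - 1
    · have e2 := insF_val_eq hj τ (insG n j hj τ v)
        (by rw [insG_val_last hj τ v h1 h2])
      rw [e2, h2]
    · have hv := v.isLt
      have e1 := insG_val_mid hj τ v h1 h2
      have e2 := insF_val_lt hj τ (insG n j hj τ v) (by omega)
      rw [e2, e1]
      omega

end InsLemmas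

def insPerm (n j : ℕ) (hj : j + 1 ≤ n) (τ : Equiv.Perm (Fin (n - 1 - j))) :
    Equiv.Perm (Fin n) :=
  ⟨insF n j hj τ, insG n j hj τ, ins_left_inv hj τ, ins_right_inv hj τ⟩

lemma insPerm_apply (j : ℕ) (hj : j + 1 ≤ n) (τ : Equiv.Perm (Fin (n - 1 - j))) (x : Fin n) :
    insPerm n j hj τ x = insF n j hj τ x := rfl

lemma insPerm_symm_apply (j : ℕ) (hj : j + 1 ≤ n) (τ : Equiv.Perm (Fin (n - 1 - j)))
    (v : Fin n) : (insPerm n j hj τ).symm v = insG n j hj τ v := rfl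

lemma insPerm_val_lt {j : ℕ} (hj : j + 1 ≤ n) (τ : Equiv.Perm (Fin (n - 1 - j)))
    (x : Fin n) (h : x.val < j) : (insPerm n j hj τ x).val = n - 2 - x.val :=
  insF_val_lt hj τ x h

lemma insPerm_val_eq {j : ℕ} (hj : j + 1 ≤ n) (τ : Equiv.Perm (Fin (n - 1 - j)))
    (x : Fin n) (h2 : x.val = j) : (insPerm n j hj τ x).val = n - 1 :=
  insF_val_eq hj τ x h2

lemma insPerm_val_ge {j : ℕ} (hj : j + 1 ≤ n) (τ : Equiv.Perm (Fin (n - 1 - j)))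
    (x : Fin n) (h : ¬ x.val < j) (h2 : ¬ x.val = j) :
    (insPerm n j hj τ x).val = (τ ⟨x.val - (j + 1), by omega⟩).val :=
  insF_val_ge hj τ x h h2

lemma fiber_card (hk : 1 ≤ k) {j : ℕ} (hjk : j < k) (hjn : j < n) :
    ((univ.filter (Pk k n)).filter
      (fun σ : Equiv.Perm (Fin n) => ((σ.symm ⟨n - 1, by omega⟩ : Fin n) : ℕ) = j)).card
      = cnt k (n - 1 - j) := by
  have hj : j + 1 ≤ n := by omega
  rw [cnt]
  symm
  apply Finset.card_bij (fun τ _ => insPerm n j hj τ)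
  · -- maps into the fiber
    intro τ hτ
    simp only [Finset.mem_filter, Finset.mem_univ, true_and] at hτ ⊢
    constructor
    · -- Pk k n (insPerm n j hj τ)
      intro x
      by_cases h1 : x.val < j
      · rw [insPerm_val_lt hj τ x h1]
        have := x.isLt
        omega
      · by_cases h2 : x.val = j
        · rw [insPerm_val_eq hj τ x h2]
          omega
        · rw [insPerm_val_ge hj τ x h1 h2]
          have hPy := hτ ⟨x.val - (j + 1), by omega⟩
          simp only [Fin.val_mk] at hPy
          have := x.isLt
          have := (τ ⟨x.val - (j + 1), by omega⟩).isLt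
          omega
    · -- fiber value
      have e := insG_val_last hj τ (⟨n - 1, by omega⟩ : Fin n)
        (by simp only [Fin.val_mk]; omega) (by simp only [Fin.val_mk])
      rw [insPerm_symm_apply, e]
  · -- injective
    intro τ1 h1m τ2 h2m heq
    apply Equiv.ext
    intro x
    have hx : x.val + (j + 1) < n := by have := x.isLt; omega
    have hvals := congrArg (fun (e : Equiv.Perm (Fin n)) => (e ⟨x.val + (j + 1), hx⟩).val) heq
    rw [insPerm_val_ge hj τ1 _ (by simp only [Fin.val_mk]; omega)
        (by simp only [Fin.val_mk]; omega),
      insPerm_val_ge hj τ2 _ (by simp only [Fin.val_mk]; omega)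
        (by simp only [Fin.val_mk]; omega)] at hvals
    simp only [Fin.val_mk, Nat.add_sub_cancel, Fin.eta] at hvals
    exact Fin.ext hvals
  · -- surjective
    intro σ hσmem
    simp only [Finset.mem_filter, Finset.mem_univ, true_and] at hσmem
    obtain ⟨hP, hfib⟩ := hσmem
    have hlast : ∀ i : Fin n, i.val = (j + 1) - 1 → (σ i : ℕ) = n - 1 := by
      intro i hi
      have hsymm : σ.symm ⟨n - 1, by omega⟩ = i := Fin.ext (by rw [hfib]; omega)
      rw [← hsymm, Equiv.apply_symm_apply]
    have hsmall := small_of_ge σ hP (c := j + 1) (by omega) (by omega) hlast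
    have hgdef : ∀ x : Fin (n - 1 - j),
        (σ (⟨x.val + (j + 1), by have := x.isLt; omega⟩ : Fin n) : ℕ) < n - 1 - j := by
      intro x
      have := hsmall ⟨x.val + (j + 1), by have := x.isLt; omega⟩
        (by simp only [Fin.val_mk]; omega)
      omega
    set g : Fin (n - 1 - j) → Fin (n - 1 - j) := fun x =>
      ⟨(σ (⟨x.val + (j + 1), by have := x.isLt; omega⟩ : Fin n) : ℕ), hgdef x⟩ with hgdefn
    have hgval : ∀ x : Fin (n - 1 - j),
        (g x : ℕ) = (σ (⟨x.val + (j + 1), by have := x.isLt; omega⟩ : Fin n) : ℕ) :=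
      fun x => rfl
    have hginj : Function.Injective g := by
      intro a b hab
      have h1 := congrArg Fin.val hab
      rw [hgval a, hgval b] at h1
      have h2 : σ (⟨a.val + (j + 1), by have := a.isLt; omega⟩ : Fin n) =
          σ (⟨b.val + (j + 1), by have := b.isLt; omega⟩ : Fin n) := Fin.ext h1
      have h3 := congrArg Fin.val (σ.injective h2)
      simp only [Fin.val_mk] at h3
      exact Fin.ext (by omega)
    have hgbij := Finite.injective_iff_bijective.mp hginj
    have hgval2 : ∀ y : Fin (n - 1 - j),
        ((Equiv.ofBijective g hgbij y : Fin (n - 1 - j)) : ℕ) =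
          (σ (⟨y.val + (j + 1), by have := y.isLt; omega⟩ : Fin n) : ℕ) :=
      fun y => rfl
    refine ⟨Equiv.ofBijective g hgbij, ?_, ?_⟩
    · simp only [Finset.mem_filter, Finset.mem_univ, true_and]
      intro x
      rw [hgval2 x]
      have hPX := hP ⟨x.val + (j + 1), by have := x.isLt; omega⟩
      simp only [Fin.val_mk] at hPX
      have := x.isLt
      omega
    · apply Equiv.ext
      intro x
      apply Fin.ext
      by_cases h1 : x.val < j
      · rw [insPerm_val_lt hj _ x h1]
        have := forced σ hP (c := j + 1) (by omega) (by omega) hlast x.val (by omega) x rfl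
        omega
      · by_cases h2 : x.val = j
        · rw [insPerm_val_eq hj _ x h2]
          exact (hlast x (by omega)).symm
        · rw [insPerm_val_ge hj _ x h1 h2]
          rw [hgval2 ⟨x.val - (j + 1), by omega⟩]
          exact congrArg (fun z => ((σ z : Fin n) : ℕ))
            (Fin.ext (by simp only [Fin.val_mk]; omega))

lemma cnt_rec (hk : 1 ≤ k) (hn : 1 ≤ n) :
    cnt k n = ∑ j ∈ Finset.range (min k n), cnt k (n - 1 - j) := by
  have hn1 : n - 1 < n := by omega
  rw [cnt]
  rw [Finset.card_eq_sum_card_fiberwise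
      (f := fun σ : Equiv.Perm (Fin n) => ((σ.symm ⟨n - 1, hn1⟩ : Fin n) : ℕ))
      (t := Finset.range (min k n))
      (fun σ hσ => by
        rw [Finset.mem_coe, Finset.mem_filter] at hσ
        have hP := hσ.2
        rw [Finset.mem_coe, Finset.mem_range]
        show ((σ.symm (⟨n - 1, hn1⟩ : Fin n) : Fin n) : ℕ) < min k n
        have hup := (hP (σ.symm ⟨n - 1, hn1⟩)).2
        have hiv : ((σ (σ.symm ⟨n - 1, hn1⟩) : Fin n) : ℕ) = n - 1 := by
          rw [Equiv.apply_symm_apply]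
        have := (σ.symm (⟨n - 1, hn1⟩ : Fin n)).isLt
        omega)]
  apply Finset.sum_congr rfl
  intro j hj
  rw [Finset.mem_range] at hj
  exact fiber_card hk (by omega) (by omega)

lemma cnt_zero : cnt k 0 = 1 := by
  rw [cnt]
  have h : (univ.filter (Pk k 0)) = (univ : Finset (Equiv.Perm (Fin 0))) :=
    Finset.filter_true_of_mem (fun σ _ => fun i => i.elim0)
  rw [h, Finset.card_univ]
  simp

lemma cnt_one (hk : 1 ≤ k) : cnt k 1 = 1 := by
  rw [cnt_rec hk le_rfl, Nat.min_eq_right hk, Finset.sum_range_one]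
  exact cnt_zero

lemma cnt_twostep (hk : 1 ≤ k) (hn : 2 ≤ n) :
    cnt k n + (if k + 1 ≤ n then cnt k (n - 1 - k) else 0) = 2 * cnt k (n - 1) := by
  have hM : min k n = (min k n - 1) + 1 := by omega
  have eA : cnt k n = (∑ j ∈ Finset.range (min k n - 1), cnt k (n - 2 - j)) + cnt k (n - 1) := by
    rw [cnt_rec hk (by omega), hM, Finset.sum_range_succ']
    rw [show n - 1 - 0 = n - 1 by omega]
    congr 1
    exact Finset.sum_congr rfl (fun j _ => by rw [show n - 1 - (j + 1) = n - 2 - j by omega])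
  have eB : cnt k (n - 1) = ∑ j ∈ Finset.range (min k (n - 1)), cnt k (n - 2 - j) := by
    rw [cnt_rec hk (n := n - 1) (by omega)]
    exact Finset.sum_congr rfl (fun j _ => by rw [show n - 1 - 1 - j = n - 2 - j by omega])
  by_cases hkn : k + 1 ≤ n
  · rw [if_pos hkn]
    rw [show min k n - 1 = k - 1 by omega] at eA
    rw [show min k (n - 1) = k by omega] at eB
    have h4 := Finset.sum_range_succ (fun j => cnt k (n - 2 - j)) (k - 1)
    rw [show k - 1 + 1 = k by omega] at h4
    rw [show n - 2 - (k - 1) = n - 1 - k by omega] at h4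
    omega
  · rw [if_neg hkn]
    rw [show min k n - 1 = n - 1 by omega] at eA
    rw [show min k (n - 1) = n - 1 by omega] at eB
    omega

lemma cnt_coeff (hk : 1 ≤ k) (n : ℕ) :
    ((cnt k n : ℤ) - (if 1 ≤ n then (cnt k (n - 1) : ℤ) + (cnt k (n - 1) : ℤ) else 0))
      + (if k + 1 ≤ n then (cnt k (n - (k + 1)) : ℤ) else 0)
      = (if n = 0 then 1 else 0) - (if n = 1 then 1 else 0) := by
  rcases Nat.lt_or_ge n 2 with h2 | h2
  · interval_cases n
    · rw [if_neg (by omega), if_neg (by omega), if_pos rfl, if_neg (by omega)]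
      rw [cnt_zero]
      ring
    · rw [if_pos le_rfl, if_neg (by omega), if_neg (by omega), if_pos rfl]
      rw [cnt_one hk, cnt_zero]
      ring
  · have hts := cnt_twostep hk h2
    rw [if_pos (by omega : 1 ≤ n), if_neg (by omega : ¬ n = 0), if_neg (by omega : ¬ n = 1)]
    by_cases hkn : k + 1 ≤ n
    · rw [if_pos hkn] at hts ⊢
      rw [show n - (k + 1) = n - 1 - k by omega]
      have := hts
      push_cast [← this]
      omega
    · rw [if_neg hkn] at hts ⊢
      omega

end Count
end AuxStmt8

theorem stmt8 (k : ℕ) (hk : 2 ≤ k) :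
    (PowerSeries.mk fun n => ((Nat.card {σ : Equiv.Perm (Fin n) //
        Avoids σ p123 ∧ Avoids σ p132 ∧ Avoids σ (rpat k)} : ℕ) : ℤ)) *
      (1 - 2 * PowerSeries.X + PowerSeries.X ^ (k + 1)) = 1 - PowerSeries.X := by
  have hk1 : 1 ≤ k := by omega
  have hcard : ∀ n : ℕ, (Nat.card {σ : Equiv.Perm (Fin n) //
      Avoids σ p123 ∧ Avoids σ p132 ∧ Avoids σ (rpat k)} : ℕ) = cnt k n := by
    intro n
    have h1 : Nat.card {σ : Equiv.Perm (Fin n) //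
        Avoids σ p123 ∧ Avoids σ p132 ∧ Avoids σ (rpat k)}
        = Nat.card {σ : Equiv.Perm (Fin n) // Pk k n σ} :=
      Nat.card_congr (Equiv.subtypeEquivRight (fun σ => char_P σ hk1))
    rw [h1, Nat.card_eq_fintype_card, Fintype.card_subtype]
    rfl
  have hfun : (PowerSeries.mk fun n => ((Nat.card {σ : Equiv.Perm (Fin n) //
        Avoids σ p123 ∧ Avoids σ p132 ∧ Avoids σ (rpat k)} : ℕ) : ℤ))
      = PowerSeries.mk (fun n => ((cnt k n : ℕ) : ℤ)) :=
    congrArg PowerSeries.mk (funext fun n => by rw [hcard n])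
  rw [hfun]
  have expand : (PowerSeries.mk (fun n => ((cnt k n : ℕ) : ℤ)))
        * (1 - 2 * PowerSeries.X + PowerSeries.X ^ (k + 1))
      = PowerSeries.mk (fun n => ((cnt k n : ℕ) : ℤ))
        - ((PowerSeries.mk (fun n => ((cnt k n : ℕ) : ℤ))) * PowerSeries.X ^ 1
          + (PowerSeries.mk (fun n => ((cnt k n : ℕ) : ℤ))) * PowerSeries.X ^ 1)
        + (PowerSeries.mk (fun n => ((cnt k n : ℕ) : ℤ))) * PowerSeries.X ^ (k + 1) := by
    ring
  rw [expand]
  apply PowerSeries.ext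
  intro n
  simp only [map_add, map_sub, PowerSeries.coeff_mk, PowerSeries.coeff_mul_X_pow',
    PowerSeries.coeff_one, PowerSeries.coeff_X]
  have hcf := cnt_coeff hk1 n
  split_ifs at hcf ⊢ <;> omega
end

section
/- Let k ≥ 2 and n ≥ 1, and let r_k be the pattern k (k−1) ⋯ 2 1 (k+1) of length k+1. If π is a permutation of {1,…,n} avoiding 123 and r_k, and π(j) = n, then j ≤ k. -/
/-
If `π` attains its maximum at position `j`, any ascent before `j` would extend by `π j` to a
`123`. So `π` is decreasing on the positions before `j`, and if there are at least `k` of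
them, the first `k` together with `j` form an occurrence of `r_k`.
-/

theorem contains_of_strictMono {n k : ℕ} {σ : Equiv.Perm (Fin n)} {τ : Fin k → ℕ}
    {f : Fin k → Fin n} (hf : StrictMono f) (hσf : StrictMono (σ ∘ f)) (hτ : StrictMono τ) :
    Contains σ τ :=
  ⟨f, hf, fun _ _ => hσf.lt_iff_lt.trans hτ.lt_iff_lt.symm⟩

theorem contains_p123 {n : ℕ} {σ : Equiv.Perm (Fin n)} {a b c : Fin n} (hab : a < b)
    (hbc : b < c) (hσab : σ a < σ b) (hσbc : σ b < σ c) : Contains σ p123 :=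
  contains_of_strictMono (f := ![a, b, c]) (by simp [hab, hbc])
    (Fin.strictMono_iff_lt_succ.mpr <| by simp [Fin.forall_fin_two, hσab, hσbc]) (by simp [p123])

theorem strictAntiOn_Iio_of_avoids_p123 {n : ℕ} {σ : Equiv.Perm (Fin n)} {j : Fin n}
    (h : Avoids σ p123) (hmax : ∀ x < j, σ x < σ j) : StrictAntiOn σ (Set.Iio j) := by
  intro a _ b hb hab
  refine lt_of_le_of_ne (not_lt.mp fun hσab => h ?_) (σ.injective.ne hab.ne')
  exact contains_p123 hab hb hσab (hmax b hb)

theorem rpat_castSucc (k : ℕ) (i : Fin k) : rpat k i.castSucc = k - i := by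
  simp [rpat, i.isLt.ne]

theorem rpat_last (k : ℕ) : rpat k (Fin.last k) = k + 1 := by
  simp [rpat]

theorem castLE_lt_of_le {k n : ℕ} {j : Fin n} (hkn : k ≤ n) (hkj : k ≤ j) (i : Fin k) :
    Fin.castLE hkn i < j := by
  rw [Fin.lt_def, Fin.val_castLE]; omega

theorem strictMono_lastCases_castLE {k n : ℕ} {j : Fin n} (hkn : k ≤ n) (hkj : k ≤ j) :
    StrictMono (Fin.lastCases j (Fin.castLE hkn) : Fin (k + 1) → Fin n) := by
  intro a b hab
  induction b using Fin.lastCases with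
  | last =>
    induction a using Fin.lastCases with
    | last => exact absurd hab (lt_irrefl _)
    | cast a => simpa using castLE_lt_of_le hkn hkj a
  | cast b =>
    induction a using Fin.lastCases with
    | last => exact absurd hab (not_lt.mpr (Fin.castSucc_lt_last b).le)
    | cast a => simpa using hab

theorem contains_rpat_of_strictAntiOn_Iio {n k : ℕ} {σ : Equiv.Perm (Fin n)} {j : Fin n}
    (hkj : k ≤ j) (hanti : StrictAntiOn σ (Set.Iio j)) (hmax : ∀ x < j, σ x < σ j) :
    Contains σ (rpat k) := by
  have hkn : k ≤ n := by omega
  have hlt := castLE_lt_of_le hkn hkj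
  refine ⟨Fin.lastCases j (Fin.castLE hkn), strictMono_lastCases_castLE hkn hkj, fun a b => ?_⟩
  induction a using Fin.lastCases with
  | last =>
    induction b using Fin.lastCases with
    | last => simp
    | cast b =>
      simp only [Fin.lastCases_last, Fin.lastCases_castSucc, rpat_last, rpat_castSucc]
      exact iff_of_false (hmax _ (hlt b)).asymm (by omega)
  | cast a =>
    induction b using Fin.lastCases with
    | last =>
      simp only [Fin.lastCases_last, Fin.lastCases_castSucc, rpat_last, rpat_castSucc]
      exact iff_of_true (hmax _ (hlt a)) (by omega)
    | cast b =>
      simp only [Fin.lastCases_castSucc, rpat_castSucc]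
      rw [hanti.lt_iff_gt (hlt a) (hlt b), Fin.lt_def, Fin.val_castLE, Fin.val_castLE]
      omega

theorem stmt10_general (k n : ℕ) (π : Equiv.Perm (Fin n))
    (h1 : Avoids π p123) (h2 : Avoids π (rpat k)) :
    ∀ j : Fin n, (π j).val = n - 1 → j.val + 1 ≤ k := by
  intro j hj
  by_contra hkj
  have hmax : ∀ x < j, π x < π j := fun x hx => by
    have hne := Fin.val_ne_of_ne (π.injective.ne hx.ne)
    have := (π x).isLt
    rw [Fin.lt_def]; omega
  exact h2 <| contains_rpat_of_strictAntiOn_Iio (by omega)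
    (strictAntiOn_Iio_of_avoids_p123 h1 hmax) hmax

theorem stmt10 (k n : ℕ) (hk : 2 ≤ k) (hn : 1 ≤ n) (π : Equiv.Perm (Fin n))
    (h1 : Avoids π p123) (h2 : Avoids π (rpat k)) :
    ∀ j : Fin n, (π j).val = n - 1 → j.val + 1 ≤ k :=
  stmt10_general k n π h1 h2
end

section
/- Let n ≥ 1 and let π be a permutation of {1,…,n} avoiding 123. Define m to be the least index j with 2 ≤ j ≤ n and π(j−1) < π(j) if such an index exists, and m = n+1 otherwise (i.e. if π is decreasing). For 1 ≤ i ≤ n+1, let ins(π, i) be the permutation of {1,…,n+1} obtained from π by inserting the value n+1 at position i (so ins(π,i)(i) = n+1, ins(π,i)(l) = π(l) for l < i and ins(π,i)(l) = π(l−1) for l > i). Then ins(π, i) avoids 123 if and only if i ≤ m. -/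
lemma contains_p123_iff {n : ℕ} (σ : Equiv.Perm (Fin n)) :
    Contains σ p123 ↔ ∃ a b c : Fin n, a < b ∧ b < c ∧ σ a < σ b ∧ σ b < σ c := by
  constructor
  · rintro ⟨f, hf, hpat⟩
    exact ⟨f 0, f 1, f 2, hf (by decide), hf (by decide),
      (hpat 0 1).mpr (by decide), (hpat 1 2).mpr (by decide)⟩
  · rintro ⟨a, b, c, hab, hbc, hσab, hσbc⟩
    have hmono {α : Type} [Preorder α] {x y z : α} (hxy : x < y) (hyz : y < z) :
        StrictMono ![x, y, z] := by
      refine Fin.strictMono_iff_lt_succ.mpr fun k => ?_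
      fin_cases k
      exacts [hxy, hyz]
    refine ⟨![a, b, c], hmono hab hbc, fun k l => ?_⟩
    fin_cases k <;> fin_cases l <;> simp [p123] <;> order

lemma exists_adjacent_lt_of_lt {α : Type*} [LinearOrder α] {n : ℕ} (f : Fin n → α) {a b : Fin n}
    (hab : a ≤ b) (h : f a < f b) :
    ∃ (j : ℕ) (hj : j + 1 ≤ b), f ⟨j, by omega⟩ < f ⟨j + 1, by omega⟩ := by
  by_contra! hdesc
  have hanti : Antitone fun k : Fin (b + 1) => f (Fin.castLE b.isLt k) :=
    Fin.antitone_iff_succ_le.mpr fun k => hdesc k (by omega)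
  exact (hanti (show (⟨a, by omega⟩ : Fin (b + 1)) ≤ ⟨b, by omega⟩ from hab)).not_gt h

lemma apply_succAbove_of_insert {n : ℕ} {π : Equiv.Perm (Fin n)} {π' : Equiv.Perm (Fin (n + 1))}
    {i : Fin (n + 1)}
    (hins_lt : ∀ l : ℕ, ∀ _hl : l < i.val,
      π' ⟨l, by have := i.isLt; omega⟩ =
        Fin.castSucc (π ⟨l, by have := i.isLt; omega⟩))
    (hins_gt : ∀ l : ℕ, ∀ _hl : i.val < l, ∀ _hln : l ≤ n,
      π' ⟨l, by omega⟩ = Fin.castSucc (π ⟨l - 1, by omega⟩))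
    (j : Fin n) : π' (i.succAbove j) = (π j).castSucc := by
  rcases lt_or_ge j.castSucc i with h | h
  · rw [Fin.succAbove_of_castSucc_lt _ _ h]
    exact hins_lt j h
  · rw [Fin.succAbove_of_le_castSucc _ _ h]
    exact hins_gt (j + 1) (by simp [Fin.le_def] at h; omega) j.isLt

lemma contains_p123_iff_of_insert_last {n : ℕ} {σ : Equiv.Perm (Fin n)}
    {σ' : Equiv.Perm (Fin (n + 1))} {i : Fin (n + 1)} (hi : σ' i = Fin.last n)
    (hσ' : ∀ j, σ' (i.succAbove j) = (σ j).castSucc) :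
    Contains σ' p123 ↔
      Contains σ p123 ∨ ∃ a b : Fin n, a < b ∧ b.castSucc < i ∧ σ a < σ b := by
  simp only [contains_p123_iff]
  constructor
  · rintro ⟨a, b, c, hab, hbc, hσab, hσbc⟩
    have hne {x y : Fin (n + 1)} (h : σ' x < σ' y) : x ≠ i := fun hx =>
      (Fin.le_last _).not_gt (hi ▸ hx ▸ h)
    obtain ⟨a, rfl⟩ := Fin.exists_succAbove_eq (hne hσab)
    obtain ⟨b, rfl⟩ := Fin.exists_succAbove_eq (hne hσbc)
    rw [hσ', hσ', Fin.castSucc_lt_castSucc_iff] at hσab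
    rw [Fin.succAbove_lt_succAbove_iff] at hab
    by_cases hc : c = i
    · subst hc
      exact .inr ⟨a, b, hab, (Fin.succAbove_lt_iff_castSucc_lt _ _).mp hbc, hσab⟩
    · obtain ⟨c, rfl⟩ := Fin.exists_succAbove_eq hc
      rw [hσ', hσ', Fin.castSucc_lt_castSucc_iff] at hσbc
      rw [Fin.succAbove_lt_succAbove_iff] at hbc
      exact .inl ⟨a, b, c, hab, hbc, hσab, hσbc⟩
  · rintro (⟨a, b, c, hab, hbc, hσab, hσbc⟩ | ⟨a, b, hab, hbi, hσab⟩)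
    · exact ⟨i.succAbove a, i.succAbove b, i.succAbove c, by simp [hσ', hab, hbc, hσab, hσbc]⟩
    · have hai : a.castSucc < i := (Fin.castSucc_lt_castSucc_iff.mpr hab).trans hbi
      refine ⟨a.castSucc, b.castSucc, i, Fin.castSucc_lt_castSucc_iff.mpr hab, hbi, ?_⟩
      rw [← Fin.succAbove_of_castSucc_lt i a hai, ← Fin.succAbove_of_castSucc_lt i b hbi,
        hσ', hσ', hi]
      exact ⟨Fin.castSucc_lt_castSucc_iff.mpr hσab, Fin.castSucc_lt_last _⟩

theorem stmt11 (n : ℕ) (π : Equiv.Perm (Fin n)) (hπ : Avoids π p123)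
    (m : ℕ)
    (hm : (∃ _h2 : 2 ≤ m, ∃ _hmn : m ≤ n,
            π ⟨m - 2, by omega⟩ < π ⟨m - 1, by omega⟩ ∧
            ∀ j : ℕ, ∀ _hj2 : 2 ≤ j, ∀ _hjm : j < m,
              ¬ π ⟨j - 2, by omega⟩ < π ⟨j - 1, by omega⟩) ∨
          (m = n + 1 ∧ ∀ j : ℕ, ∀ _hj2 : 2 ≤ j, ∀ _hjn : j ≤ n,
              ¬ π ⟨j - 2, by omega⟩ < π ⟨j - 1, by omega⟩))
    (i : Fin (n + 1)) (π' : Equiv.Perm (Fin (n + 1)))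
    (hins_i : π' i = Fin.last n)
    (hins_lt : ∀ l : ℕ, ∀ _hl : l < i.val,
      π' ⟨l, by have := i.isLt; omega⟩ =
        Fin.castSucc (π ⟨l, by have := i.isLt; omega⟩))
    (hins_gt : ∀ l : ℕ, ∀ _hl : i.val < l, ∀ _hln : l ≤ n,
      π' ⟨l, by omega⟩ = Fin.castSucc (π ⟨l - 1, by omega⟩)) :
    Avoids π' p123 ↔ i.val + 1 ≤ m := by
  have hascent : (∃ a b : Fin n, a < b ∧ b.castSucc < i ∧ π a < π b) ↔ m ≤ i.val := by
    constructor
    · rintro ⟨a, b, hab, hbi, hπab⟩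
      by_contra! him
      obtain ⟨j, hjb, hπj⟩ := exists_adjacent_lt_of_lt π hab.le hπab
      have hbi : b.val < i.val := hbi
      -- `j + 2` is the 1-indexed position of the second entry of that adjacent ascent
      have hdesc : ¬ π ⟨j + 2 - 2, by omega⟩ < π ⟨j + 2 - 1, by omega⟩ := by
        rcases hm with ⟨_, _, _, hdesc⟩ | ⟨_, hdesc⟩
        exacts [hdesc (j + 2) (by omega) (by omega), hdesc (j + 2) (by omega) (by omega)]
      exact hdesc (by simpa using hπj)
    · intro hmi
      rcases hm with ⟨h2, hmn, hπm, -⟩ | ⟨rfl, -⟩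
      · exact ⟨⟨m - 2, by omega⟩, ⟨m - 1, by omega⟩, Fin.mk_lt_mk.mpr (by omega),
          show m - 1 < i.val by omega, hπm⟩
      · omega
  rw [Avoids, contains_p123_iff_of_insert_last hins_i (apply_succAbove_of_insert hins_lt hins_gt),
    hascent, or_iff_right hπ]
  omega
end
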